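/- arXiv:2201.12415 — 8 statements merged into one kernel-verified Lean document; each statement's English description precedes it below -/
import Mathlib

section
/- The infinite product (q;q)_∞ / (q^3;q^3)_∞, expanded as a formal power series in q, has coefficients whose signs follow the pattern +,−,−,+,−,−,...: the coefficient of q^m is nonnegative if m ≡ 0 (mod 3) and nonpositive otherwise. -/
open Polynomial

/-- The "Borwein polynomial" `P_n(q) = ∏_{k=1}^n (1-q^{3k-2})(1-q^{3k-1})`. -/
noncomputable def borweinPoly (n : ℕ) : Polynomial ℤ :=
  ∏ k ∈ Finset.Icc 1 n, ((1 - X ^ (3 * k - 2)) * (1 - X ^ (3 * k - 1)))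

/-- The coefficient of `q^m` in the infinite product
`(q;q)_∞/(q^3;q^3)_∞ = ∏_{k≥1, 3∤k}(1-q^k)`.  Since factors `(1-q^k)` with
`k > m` cannot influence the coefficient of `q^m`, this coefficient equals the
coefficient of `q^m` in the finite product `P_{m+1}(q)` (note `3(m+1)-2 > m`). -/
noncomputable def borweinInfCoeff (m : ℕ) : ℤ :=
  (borweinPoly (m + 1)).coeff m


open Polynomial Finset

variable {A : Type*} [CommRing A] {B : Type*} [CommRing B]

/-- Gaussian binomial coefficient `[N choose j]_q` as an element of a commutative ring. -/
def qb (q : A) : ℕ → ℕ → A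
  | _, 0 => 1
  | 0, _+1 => 0
  | N+1, j+1 => qb q N j + q^(j+1) * qb q N (j+1)

@[simp] lemma qb_zero_right (q : A) (N : ℕ) : qb q N 0 = 1 := by cases N <;> rfl

lemma qb_succ_succ (q : A) (N j : ℕ) :
    qb q (N+1) (j+1) = qb q N j + q^(j+1) * qb q N (j+1) := rfl

lemma qb_eq_zero_of_lt (q : A) : ∀ {N j : ℕ}, N < j → qb q N j = 0 := by
  intro N
  induction N with
  | zero => intro j h; cases j with
    | zero => omega
    | succ j => rfl
  | succ N ih =>
    intro j h
    cases j with
    | zero => omega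
    | succ j =>
      rw [qb_succ_succ, ih (by omega), ih (by omega)]
      ring

lemma map_qb (f : A →+* B) (q : A) : ∀ N j, f (qb q N j) = qb (f q) N j := by
  intro N
  induction N with
  | zero => intro j; cases j with
    | zero => simp
    | succ j => simp [qb]
  | succ N ih =>
    intro j
    cases j with
    | zero => simp
    | succ j => simp [qb_succ_succ, ih]

lemma choose_two_succ (j : ℕ) : (j+1).choose 2 = j.choose 2 + j := by
  rw [Nat.choose_succ_succ, Nat.choose_one_right, add_comm]

/-- Gauss's q-binomial theorem in a commutative ring. -/
theorem gauss_qbinomial (q : A) : ∀ (N : ℕ) (z : A),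
    ∏ k ∈ range N, (1 + z * q ^ k)
      = ∑ j ∈ range (N+1), q ^ (j.choose 2) * qb q N j * z ^ j := by
  intro N
  induction N with
  | zero => intro z; simp
  | succ N ih =>
    intro z
    have h1 : ∏ k ∈ range (N+1), (1 + z * q ^ k)
        = (1 + z) * ∏ k ∈ range N, (1 + (z*q) * q ^ k) := by
      rw [Finset.prod_range_succ']
      simp only [pow_zero, mul_one, pow_succ]
      rw [mul_comm]
      congr 1
      apply Finset.prod_congr rfl
      intro k _
      ring
    have expand : (1 + z) * ∑ j ∈ range (N+1), q ^ (j.choose 2) * qb q N j * (z*q) ^ j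
        = (∑ j ∈ range (N+1), q ^ (j.choose 2 + j) * qb q N j * z ^ j)
          + ∑ j ∈ range (N+1), q ^ (j.choose 2 + j) * qb q N j * z ^ (j+1) := by
      rw [add_mul, one_mul, Finset.mul_sum, ← Finset.sum_add_distrib, ← Finset.sum_add_distrib]
      refine Finset.sum_congr rfl fun j _ => ?_
      rw [mul_pow, pow_add]
      ring
    rw [h1, ih (z*q), expand]
    have hS1 : (∑ j ∈ range (N+1), q ^ (j.choose 2 + j) * qb q N j * z ^ j)
        = (∑ j ∈ range (N+1), q ^ ((j+1).choose 2 + (j+1)) * qb q N (j+1) * z ^ (j+1)) + 1 := by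
      rw [Finset.sum_range_succ' (fun j => q ^ (j.choose 2 + j) * qb q N j * z ^ j)]
      rw [Finset.sum_range_succ (fun j => q ^ ((j+1).choose 2 + (j+1)) * qb q N (j+1) * z ^ (j+1))]
      rw [qb_eq_zero_of_lt (N := N) (j := N+1) q (by omega)]
      simp
    have hRHS : (∑ j ∈ range (N+2), q ^ (j.choose 2) * qb q (N+1) j * z ^ j)
        = (∑ j ∈ range (N+1), q ^ ((j+1).choose 2) * qb q (N+1) (j+1) * z ^ (j+1)) + 1 := by
      rw [Finset.sum_range_succ' (fun j => q ^ (j.choose 2) * qb q (N+1) j * z ^ j)]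
      simp
    rw [hS1, hRHS]
    rw [add_right_comm, ← Finset.sum_add_distrib]
    congr 1
    refine Finset.sum_congr rfl fun j _ => ?_
    rw [qb_succ_succ, choose_two_succ]
    rw [pow_add, pow_add, pow_add]
    ring
lemma toLaurent_qb (q : Polynomial ℤ) (N j : ℕ) :
    Polynomial.toLaurent (qb q N j) = qb (Polynomial.toLaurent q) N j :=
  map_qb _ q N j

/-- Product formula for Gaussian binomials. -/
lemma qb_mul_prod (q : A) : ∀ (N : ℕ) {j : ℕ}, j ≤ N →
    qb q N j * ∏ t ∈ Ico 1 (j+1), (1 - q^t) = ∏ t ∈ Ico (N+1-j) (N+1), (1 - q^t) := by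
  intro N
  induction N with
  | zero =>
    intro j hj
    interval_cases j
    simp
  | succ N ih =>
    intro j hj
    cases j with
    | zero => simp
    | succ j =>
      have e2 : N + 1 + 1 - (j + 1) = N + 1 - j := by omega
      rw [e2, qb_succ_succ, add_mul]
      rcases Nat.lt_or_ge j N with h | h
      · have hA := ih (by omega : j ≤ N)
        have hB := ih (by omega : j + 1 ≤ N)
        have hPj : (∏ t ∈ Ico 1 (j+1+1), (1 - q^t))
            = (∏ t ∈ Ico 1 (j+1), (1 - q^t)) * (1 - q^(j+1)) :=
          Finset.prod_Ico_succ_top (by omega) _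
        have hmid : (∏ t ∈ Ico (N+1-(j+1)) (N+1), (1 - q^t))
            = (1 - q^(N-j)) * ∏ t ∈ Ico (N+1-j) (N+1), (1 - q^t) := by
          rw [Finset.prod_eq_prod_Ico_succ_bot (by omega)]
          have : N + 1 - (j+1) + 1 = N + 1 - j := by omega
          rw [this]
          have : N + 1 - (j+1) = N - j := by omega
          rw [this]
        have hRHS : (∏ t ∈ Ico (N+1-j) (N+1+1), (1 - q^t))
            = (∏ t ∈ Ico (N+1-j) (N+1), (1 - q^t)) * (1 - q^(N+1)) :=
          Finset.prod_Ico_succ_top (by omega) _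
        have hq : q^(j+1) * q^(N-j) = q^(N+1) := by
          rw [← pow_add]
          congr 1
          omega
        rw [hRHS, hPj, ← mul_assoc, hA, mul_assoc (q^(j+1)), ← hPj, hB, hmid]
        linear_combination (-(∏ t ∈ Ico (N+1-j) (N+1), (1 - q^t))) * hq
      · have hj' : j = N := by omega
        rw [hj', qb_eq_zero_of_lt (N := N) (j := N+1) q (by omega)]
        simp only [mul_zero, zero_mul, add_zero]
        have e1 : N + 1 - N = 1 := by omega
        rw [e1]
        have hA := ih (by omega : N ≤ N)
        rw [e1] at hA
        rw [Finset.prod_Ico_succ_top (by omega : 1 ≤ N+1) (fun t => 1 - q^t), ← mul_assoc, hA]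

lemma one_sub_X_pow_ne_zero {t : ℕ} (ht : 1 ≤ t) : (1 - X^t : Polynomial ℤ) ≠ 0 := by
  intro h
  have h0 := congrArg (fun p => Polynomial.coeff p 0) h
  simp only [Polynomial.coeff_sub, Polynomial.coeff_one, Polynomial.coeff_X_pow,
    Polynomial.coeff_zero] at h0
  by_cases h1 : (0:ℕ) = t
  · omega
  · rw [if_neg h1] at h0; norm_num at h0

/-- Symmetry of Gaussian binomials, for `q = X^d` in `ℤ[X]`. -/
lemma qb_symm {d : ℕ} (hd : 1 ≤ d) (N j : ℕ) (hj : j ≤ N) :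
    qb (X^d : Polynomial ℤ) N j = qb (X^d : Polynomial ℤ) N (N - j) := by
  set q : Polynomial ℤ := X^d with hq
  have hne : ∀ c : ℕ, (∏ t ∈ Ico 1 (c+1), (1 - q^t)) ≠ 0 := by
    intro c
    rw [Finset.prod_ne_zero_iff]
    intro t ht
    rw [Finset.mem_Ico] at ht
    rw [hq, ← pow_mul]
    exact one_sub_X_pow_ne_zero (Nat.mul_pos (by omega) (by omega))
  have key : ∀ {i : ℕ}, i ≤ N →
      (qb q N i * (∏ t ∈ Ico 1 (i+1), (1 - q^t))) * (∏ t ∈ Ico 1 (N-i+1), (1 - q^t))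
        = ∏ t ∈ Ico 1 (N+1), (1 - q^t) := by
    intro i hi
    rw [qb_mul_prod q N hi]
    have e : N - i + 1 = N + 1 - i := by omega
    rw [e, mul_comm]
    exact Finset.prod_Ico_consecutive _ (by omega) (by omega)
  have h1 := key hj
  have h2 := key (Nat.sub_le N j)
  have e : N - (N - j) = j := by omega
  rw [e] at h2
  rw [mul_right_comm] at h2
  have h3 : (qb q N j * (∏ t ∈ Ico 1 (j+1), (1 - q^t))) * (∏ t ∈ Ico 1 (N-j+1), (1 - q^t))
      = (qb q N (N-j) * (∏ t ∈ Ico 1 (j+1), (1 - q^t))) * (∏ t ∈ Ico 1 (N-j+1), (1 - q^t)) :=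
    h1.trans h2.symm
  have h4 := mul_right_cancel₀ (hne (N-j)) h3
  exact mul_right_cancel₀ (hne j) h4
open Polynomial Finset LaurentPolynomial

/-- Triangular-type number `i(i-1)/2` over ℤ. -/
def tri (i : ℤ) : ℤ := i * (i - 1) / 2

lemma two_tri (i : ℤ) : 2 * tri i = i * (i - 1) := by
  have h : Even (i * (i - 1)) := Int.even_mul_pred_self i
  unfold tri
  obtain ⟨k, hk⟩ := h
  omega

lemma tri_cast (m : ℕ) : ((m.choose 2 : ℕ) : ℤ) = tri (m : ℤ) := by
  have h1 : m.choose 2 * 2 = m * (m - 1) := by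
    rw [Nat.choose_two_right]
    exact Nat.div_mul_cancel (Nat.even_mul_pred_self m).two_dvd
  have h2 := two_tri (m : ℤ)
  have h3 : ((m.choose 2 * 2 : ℕ) : ℤ) = ((m * (m-1) : ℕ) : ℤ) := by rw [h1]
  push_cast at h3
  rcases Nat.eq_zero_or_pos m with hm | hm
  · subst hm; simp [tri]
  · have : ((m - 1 : ℕ) : ℤ) = (m : ℤ) - 1 := by omega
    rw [this] at h3
    omega

/-- Exponent in the Jacobi triple product series. -/
def jexp (M a : ℕ) (i : ℤ) : ℤ := M * tri i + a * i

lemma jexp_nonneg (M a : ℕ) (ha : a ≤ M) (i : ℤ) : 0 ≤ jexp M a i := by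
  have h := two_tri i
  have hM : (0:ℤ) ≤ M := Int.ofNat_nonneg M
  have ha0 : (0:ℤ) ≤ a := Int.ofNat_nonneg a
  have haM : (a:ℤ) ≤ M := by exact_mod_cast ha
  unfold jexp
  rcases le_or_gt 0 i with h0 | h0
  · have hii : 0 ≤ i * (i - 1) := by rcases le_or_gt i 1 with h1 | h1 <;> nlinarith
    nlinarith [mul_nonneg hM hii, mul_nonneg ha0 h0]
  · have hai : (M:ℤ) * i ≤ a * i := mul_le_mul_of_nonpos_right haM h0.le
    have hii : 0 ≤ (i + 1) * i := by rcases le_or_gt i (-1) with h1 | h1 <;> nlinarith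
    nlinarith [mul_nonneg hM hii, hai]

/-- lower bound: `jexp M a i ≥ M * (|i| - 1)`. -/
lemma jexp_lb (M a : ℕ) (ha : a ≤ M) (i : ℤ) : (M:ℤ) * (|i| - 1) ≤ jexp M a i := by
  have h := two_tri i
  have hM : (0:ℤ) ≤ M := Int.ofNat_nonneg M
  have ha0 : (0:ℤ) ≤ a := Int.ofNat_nonneg a
  have haM : (a:ℤ) ≤ M := by exact_mod_cast ha
  unfold jexp
  rcases le_or_gt 0 i with h0 | h0
  · rw [abs_of_nonneg h0]
    have hii : 0 ≤ (i - 1) * (i - 2) := by rcases le_or_gt i 1 with h1 | h1 <;> nlinarith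
    nlinarith [mul_nonneg hM hii, mul_nonneg ha0 h0]
  · rw [abs_of_neg h0]
    have hai : (M:ℤ) * i ≤ a * i := mul_le_mul_of_nonpos_right haM h0.le
    have hii : 0 ≤ (i + 1) * (i + 2) := by rcases le_or_gt i (-2) with h1 | h1 <;> nlinarith
    nlinarith [mul_nonneg hM hii, hai]

def jexpN (M a : ℕ) (i : ℤ) : ℕ := (jexp M a i).toNat

lemma jexpN_cast (M a : ℕ) (ha : a ≤ M) (i : ℤ) : ((jexpN M a i : ℕ) : ℤ) = jexp M a i :=
  Int.toNat_of_nonneg (jexp_nonneg M a ha i)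
section
variable {β : Type*}

lemma T_prod (s : Finset β) (f : β → ℤ) :
    ∏ k ∈ s, (T (f k) : LaurentPolynomial ℤ) = T (∑ k ∈ s, f k) := by
  induction s using Finset.cons_induction with
  | empty => simp
  | cons b s hb ih => rw [Finset.prod_cons, Finset.sum_cons, ih, ← T_add]

lemma neg_T_helper (x : ℤ) : (-T x) * (1 - T (-x)) = 1 - (T x : LaurentPolynomial ℤ) := by
  rw [mul_sub, mul_one, neg_mul, ← T_add, add_neg_cancel, T_zero]
  ring

lemma sign_helper {L : Type*} [CommRing L] (p q : ℕ) (i : ℤ)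
    (h : ((p:ℤ) + q) % 2 = i % 2) :
    ((-1:L))^p * (-1)^q = ((Int.negOnePow i : ℤ) : L) := by
  rw [← pow_add]
  rcases Nat.even_or_odd (p + q) with he | ho
  · have hi : Even i := by
      rw [Int.even_iff]
      rw [Nat.even_iff] at he
      omega
    rw [Even.neg_one_pow (by exact_mod_cast he), Int.negOnePow_even i hi]
    simp
  · have hi : Odd i := by
      rw [Int.odd_iff]
      rw [Nat.odd_iff] at ho
      omega
    rw [Odd.neg_one_pow (by exact_mod_cast ho), Int.negOnePow_odd i hi]
    simp

end
-- appended to base.lean for testing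
open Polynomial Finset LaurentPolynomial

lemma star (M a n : ℕ) (ha : 1 ≤ a) (haM : a < M) :
    ((∏ j ∈ Icc 1 n, (1 - X^(M*j - a))) * (∏ j ∈ Icc 1 n, (1 - X^(M*j - (M-a)))) : Polynomial ℤ)
    = ∑ i ∈ Icc (-(n:ℤ)) (n:ℤ),
        ((Int.negOnePow i : ℤ) : Polynomial ℤ) * X^(jexpN M a i)
          * qb (X^M : Polynomial ℤ) (2*n) ((n:ℤ)+i).toNat := by
  set L1 : Polynomial ℤ := ∏ j ∈ Icc 1 n, (1 - X^(M*j - a)) with hL1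
  set L2 : Polynomial ℤ := ∏ j ∈ Icc 1 n, (1 - X^(M*j - (M-a))) with hL2
  -- the exponent sequence
  set w : ℕ → ℤ := fun k => (a:ℤ) + M*k - M*n with hw
  have G := gauss_qbinomial (A := LaurentPolynomial ℤ) (T M) (2*n) (-T ((a:ℤ) - M*n))
  -- rewrite the factors of the LHS of Gauss
  have hfac : ∀ k : ℕ, (1 : LaurentPolynomial ℤ) + (-T ((a:ℤ) - M*n)) * (T (M:ℤ))^k
      = 1 - T (w k) := by
    intro k
    rw [T_pow, neg_mul, ← T_add, ← sub_eq_add_neg]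
    congr 2
    simp only [hw]
    push_cast
    ring
  rw [Finset.prod_congr rfl (fun k _ => hfac k)] at G
  -- split the product at n
  rw [← Finset.prod_range_mul_prod_Ico (fun k => 1 - (T (w k) : LaurentPolynomial ℤ))
      (by omega : n ≤ 2*n)] at G
  -- lower half: flip the negative exponents
  have hlow : ∏ k ∈ range n, (1 - (T (w k) : LaurentPolynomial ℤ))
      = ((-1 : LaurentPolynomial ℤ)^n * T (∑ k ∈ range n, w k)) * Polynomial.toLaurent L1 := by
    have h1 : ∀ k ∈ range n, (1 - (T (w k) : LaurentPolynomial ℤ))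
        = (-T (w k)) * (1 - T (-(w k))) := fun k _ => (neg_T_helper (w k)).symm
    rw [Finset.prod_congr rfl h1, Finset.prod_mul_distrib]
    congr 1
    · have : ∀ k : ℕ, (-T (w k) : LaurentPolynomial ℤ) = (-1) * T (w k) := fun k => by ring
      rw [Finset.prod_congr rfl (fun k _ => this k), Finset.prod_mul_distrib,
        Finset.prod_const, T_prod]
      simp
    · -- reindex k ↦ n - k  to  Icc 1 n
      rw [hL1, map_prod]
      apply Finset.prod_bij' (fun (k : ℕ) _ => n - k) (fun (j : ℕ) _ => n - j)
      · intro k hk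
        simp only [Finset.mem_range] at hk
        simp only [Finset.mem_Icc]
        omega
      · intro j hj
        simp only [Finset.mem_Icc] at hj
        simp only [Finset.mem_range]
        omega
      · intro k hk
        simp only [Finset.mem_range] at hk
        omega
      · intro j hj
        simp only [Finset.mem_Icc] at hj
        omega
      · intro k hk
        simp only [Finset.mem_range] at hk
        have hcast : ((M * (n - k) - a : ℕ) : ℤ) = -(w k) := by
          have hMa : a ≤ M * (n - k) := by
            calc a ≤ M := le_of_lt haM
            _ ≤ M * (n - k) := Nat.le_mul_of_pos_right M (by omega)
          push_cast [hMa]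
          simp only [hw]
          push_cast [(by omega : k ≤ n)]
          ring
        rw [map_sub, Polynomial.toLaurent_one, Polynomial.toLaurent_X_pow, hcast]
  have hhigh : ∏ k ∈ Ico n (2*n), (1 - (T (w k) : LaurentPolynomial ℤ))
      = Polynomial.toLaurent L2 := by
    rw [hL2, map_prod]
    apply Finset.prod_bij' (fun (k : ℕ) _ => k - n + 1) (fun (j : ℕ) _ => n + j - 1)
    · intro k hk
      simp only [Finset.mem_Ico] at hk
      simp only [Finset.mem_Icc]
      omega
    · intro j hj
      simp only [Finset.mem_Icc] at hj
      simp only [Finset.mem_Ico]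
      omega
    · intro k hk
      simp only [Finset.mem_Ico] at hk
      omega
    · intro j hj
      simp only [Finset.mem_Icc] at hj
      omega
    · intro k hk
      simp only [Finset.mem_Ico] at hk
      have hMa : M - a ≤ M * (k - n + 1) := by
        have : M ≤ M * (k - n + 1) := Nat.le_mul_of_pos_right M (by omega)
        omega
      have hcast : ((M * (k - n + 1) - (M - a) : ℕ) : ℤ) = w k := by
        push_cast [hMa, (by omega : a ≤ M), (by omega : n ≤ k)]
        simp only [hw]
        push_cast
        ring
      rw [map_sub, Polynomial.toLaurent_one, Polynomial.toLaurent_X_pow, hcast]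
  rw [hlow, hhigh] at G
  -- now normalize:  multiply by (-1)^n * T (-S)
  set S : ℤ := ∑ k ∈ range n, w k with hS
  have hnorm : Polynomial.toLaurent (L1 * L2)
      = ((-1 : LaurentPolynomial ℤ)^n * T (-S)) *
        ∑ j ∈ range (2*n+1), (T (M:ℤ))^(j.choose 2) * qb (T (M:ℤ)) (2*n) j
          * (-T ((a:ℤ) - M*n))^j := by
    rw [← G, map_mul]
    have : ((-1 : LaurentPolynomial ℤ)^n * T (-S)) * ((-1)^n * T S * Polynomial.toLaurent L1 * Polynomial.toLaurent L2)
        = ((-1)^n * (-1)^n) * (T (-S) * T S) * (Polynomial.toLaurent L1 * Polynomial.toLaurent L2) := by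
      ring
    rw [this, ← T_add, neg_add_cancel, T_zero, ← pow_add]
    have : Even (n + n) := ⟨n, rfl⟩
    rw [Even.neg_one_pow this]
    ring
  -- closed form for S
  have hsum : (∑ k ∈ range n, (k:ℤ)) = tri n := by
    have h1 := Finset.sum_range_id_mul_two n
    have h2 := two_tri (n:ℤ)
    have h3 : ((∑ i ∈ range n, i : ℕ) : ℤ) = ∑ k ∈ range n, (k:ℤ) := by push_cast; rfl
    have h4 : (((∑ i ∈ range n, i) * 2 : ℕ) : ℤ) = ((n * (n-1) : ℕ) : ℤ) := by rw [h1]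
    rcases Nat.eq_zero_or_pos n with hn | hn
    · subst hn; simp [tri]
    · have h5 : ((n - 1 : ℕ) : ℤ) = (n : ℤ) - 1 := by omega
      push_cast [h5] at h4
      omega
  have hSval : S = n * ((a:ℤ) - M*n) + M * tri n := by
    rw [hS]
    have : ∀ k ∈ range n, w k = ((a:ℤ) - M*n) + (M:ℤ)*k := by
      intro k _
      simp only [hw]
      ring
    rw [Finset.sum_congr rfl this, Finset.sum_add_distrib, Finset.sum_const, card_range,
      ← Finset.mul_sum, hsum]
    simp [nsmul_eq_mul]
  apply Polynomial.toLaurent_injective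
  rw [hnorm, map_sum, Finset.mul_sum]
  apply Finset.sum_bij' (fun (j : ℕ) _ => (j:ℤ) - n) (fun (i : ℤ) _ => ((n:ℤ)+i).toNat)
  · intro j hj
    simp only [Finset.mem_range] at hj
    simp only [Finset.mem_Icc]
    omega
  · intro i hi
    simp only [Finset.mem_Icc] at hi
    simp only [Finset.mem_range]
    omega
  · intro j hj
    simp only [Finset.mem_range] at hj
    omega
  · intro i hi
    simp only [Finset.mem_Icc] at hi
    omega
  · intro j hj
    simp only [Finset.mem_range] at hj
    -- value equality
    have hj' : ((n:ℤ) + ((j:ℤ) - n)) = (j:ℤ) := by ring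
    rw [map_mul, map_mul, map_intCast, Polynomial.toLaurent_X_pow, hj', Int.toNat_natCast,
      toLaurent_qb, Polynomial.toLaurent_X_pow]
    set i : ℤ := (j:ℤ) - n with hi
    -- exponent equality
    have hcj : ((j.choose 2 : ℕ) : ℤ) = tri ((n:ℤ) + i) := by
      rw [tri_cast]
      congr 1
      omega
    have hexp : -S + (tri ((n:ℤ)+i)) * M + ((n:ℤ)+i) * ((a:ℤ) - M*n) = jexp M a i := by
      have h1 := two_tri ((n:ℤ)+i)
      have h2 := two_tri (n:ℤ)
      have h3 := two_tri i
      have key : 2 * (-S + (tri ((n:ℤ)+i)) * M + ((n:ℤ)+i) * ((a:ℤ) - M*n))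
          = 2 * jexp M a i := by
        rw [hSval]
        unfold jexp
        linear_combination (M:ℤ) * h1 - (M:ℤ) * h2 - (M:ℤ) * h3
      omega
    have hTj : (T ((jexpN M a i : ℕ)) : LaurentPolynomial ℤ) = T (jexp M a i) := by
      rw [jexpN_cast M a (le_of_lt haM) i]
    rw [hTj]
    have hsign : ((-1 : LaurentPolynomial ℤ))^n * (-1)^j = ((Int.negOnePow i : ℤ) : LaurentPolynomial ℤ) := by
      apply sign_helper
      omega
    calc ((-1 : LaurentPolynomial ℤ)^n * T (-S)) *
          (T (M:ℤ) ^ j.choose 2 * qb (T (M:ℤ)) (2*n) j * (-T ((a:ℤ) - (M:ℤ)*n)) ^ j)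
        = ((-1)^n * (-1)^j) * ((T (-S) * T ((j.choose 2 : ℕ) * (M:ℤ)) * T (j * ((a:ℤ) - (M:ℤ)*n)))
            * qb (T (M:ℤ)) (2*n) j) := by
          rw [T_pow, neg_pow (T ((a:ℤ) - (M:ℤ)*n) : LaurentPolynomial ℤ) j, T_pow]
          ring
      _ = ((Int.negOnePow i : ℤ) : LaurentPolynomial ℤ) * T (jexp M a i) * qb (T (M:ℤ)) (2*n) j := by
          rw [hsign, ← T_add, ← T_add]
          have : -S + ((j.choose 2 : ℕ) : ℤ) * (M:ℤ) + (j:ℤ) * ((a:ℤ) - (M:ℤ)*n) = jexp M a i := by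
            rw [hcj]
            rw [← hexp]
            congr 2
            omega
          rw [this]
          ring
open Polynomial Finset

lemma prod_congr_dvd {d : Polynomial ℤ} {β : Type*} (s : Finset β) (f g : β → Polynomial ℤ)
    (h : ∀ k ∈ s, d ∣ f k - g k) : d ∣ ∏ k ∈ s, f k - ∏ k ∈ s, g k := by
  induction s using Finset.cons_induction with
  | empty => simp
  | cons b s hb ih =>
    rw [Finset.prod_cons, Finset.prod_cons]
    have h1 : d ∣ f b - g b := h b (Finset.mem_cons_self b s)
    have h2 : d ∣ ∏ k ∈ s, f k - ∏ k ∈ s, g k := ih (fun k hk => h k (Finset.mem_cons_of_mem hk))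
    have : f b * ∏ k ∈ s, f k - g b * ∏ k ∈ s, g k
        = (f b - g b) * ∏ k ∈ s, f k + g b * (∏ k ∈ s, f k - ∏ k ∈ s, g k) := by ring
    rw [this]
    exact dvd_add (Dvd.dvd.mul_right h1 _) (Dvd.dvd.mul_left h2 _)

lemma one_sub_prod {N : ℕ} {β : Type*} (s : Finset β) (d : β → ℕ)
    (h : ∀ t ∈ s, N ≤ d t) : (X:Polynomial ℤ)^N ∣ (∏ t ∈ s, (1 - X^(d t)) - 1) := by
  have := prod_congr_dvd (d := (X:Polynomial ℤ)^N) s (fun t => 1 - X^(d t)) (fun _ => 1)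
    (fun k hk => by
      have : (1 - X^(d k) : Polynomial ℤ) - 1 = -(X^(d k)) := by ring
      rw [this]
      exact (pow_dvd_pow X (h k hk)).neg_right)
  simpa using this

/-- The finite Jacobi triple product congruence. -/
lemma jtp (M a N n : ℕ) (ha : 1 ≤ a) (haM : a < M) (hn : N ≤ n) :
    (X:Polynomial ℤ)^N ∣
      ((∏ t ∈ Icc 1 n, (1 - X^(M*t))) * (∏ j ∈ Icc 1 n, (1 - X^(M*j - a)))
        * (∏ j ∈ Icc 1 n, (1 - X^(M*j - (M-a))))
      - ∑ i ∈ Icc (-(n:ℤ)) (n:ℤ), ((Int.negOnePow i : ℤ) : Polynomial ℤ) * X^(jexpN M a i)) := by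
  have hM : 1 ≤ M := by omega
  have hstar := star M a n ha haM
  set E : Polynomial ℤ := ∏ t ∈ Icc 1 n, (1 - X^(M*t)) with hE
  have hassoc : E * (∏ j ∈ Icc 1 n, (1 - X^(M*j - a))) * (∏ j ∈ Icc 1 n, (1 - X^(M*j - (M-a))))
      = E * ((∏ j ∈ Icc 1 n, (1 - X^(M*j - a))) * (∏ j ∈ Icc 1 n, (1 - X^(M*j - (M-a))))) := by
    ring
  rw [hassoc, hstar, Finset.mul_sum, ← Finset.sum_sub_distrib]
  apply Finset.dvd_sum
  intro i hi
  simp only [Finset.mem_Icc] at hi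
  set s : ℕ := i.natAbs with hs
  have hsn : s ≤ n := by omega
  -- reduce the q-binomial to index n - s
  have hqs : qb (X^M : Polynomial ℤ) (2*n) (((n:ℤ)+i).toNat) = qb (X^M) (2*n) (n - s) := by
    rcases le_or_gt 0 i with h0 | h0
    · have h1 : (((n:ℤ)+i).toNat) = n + s := by omega
      rw [h1, qb_symm hM (2*n) (n+s) (by omega)]
      congr 1
      omega
    · have h1 : (((n:ℤ)+i).toNat) = n - s := by omega
      rw [h1]
  -- split E
  have hEsplit : E = (∏ t ∈ Ico 1 (n-s+1), (1 - X^(M*t))) * ∏ t ∈ Ico (n-s+1) (n+1), (1 - X^(M*t)) := by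
    rw [hE, ← Finset.Ico_add_one_right_eq_Icc]
    exact (Finset.prod_Ico_consecutive _ (by omega : 1 ≤ n-s+1) (by omega : n-s+1 ≤ n+1)).symm
  have hconv : ∀ (u v : ℕ), ∏ t ∈ Ico u v, (1 - (X^M : Polynomial ℤ)^t) = ∏ t ∈ Ico u v, (1 - X^(M*t)) :=
    fun u v => Finset.prod_congr rfl (fun t _ => by rw [← pow_mul])
  have hPF : qb (X^M : Polynomial ℤ) (2*n) (n-s) * ∏ t ∈ Ico 1 (n-s+1), (1 - X^(M*t))
      = ∏ t ∈ Ico (2*n+1-(n-s)) (2*n+1), (1 - X^(M*t)) := by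
    have := qb_mul_prod (X^M : Polynomial ℤ) (2*n) (by omega : n - s ≤ 2*n)
    calc qb (X^M : Polynomial ℤ) (2*n) (n-s) * ∏ t ∈ Ico 1 (n-s+1), (1 - X^(M*t))
        = qb (X^M : Polynomial ℤ) (2*n) (n-s) * ∏ t ∈ Ico 1 (n-s+1), (1 - (X^M)^t) := by
          rw [hconv]
      _ = ∏ t ∈ Ico (2*n+1-(n-s)) (2*n+1), (1 - (X^M)^t) := this
      _ = ∏ t ∈ Ico (2*n+1-(n-s)) (2*n+1), (1 - X^(M*t)) := hconv _ _
  -- the per-term difference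
  have key : (X:Polynomial ℤ)^(M*(n-s+1)) ∣
      (qb (X^M : Polynomial ℤ) (2*n) (((n:ℤ)+i).toNat) * E - 1) := by
    rw [hqs, hEsplit, ← mul_assoc, hPF]
    set R : Polynomial ℤ := ∏ t ∈ Ico (2*n+1-(n-s)) (2*n+1), (1 - X^(M*t)) with hR
    set P : Polynomial ℤ := ∏ t ∈ Ico (n-s+1) (n+1), (1 - X^(M*t)) with hP
    have hR1 : (X:Polynomial ℤ)^(M*(n-s+1)) ∣ (R - 1) := by
      apply one_sub_prod
      intro t ht
      simp only [Finset.mem_Ico] at ht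
      have : n - s + 1 ≤ t := by omega
      exact Nat.mul_le_mul_left M this
    have hP1 : (X:Polynomial ℤ)^(M*(n-s+1)) ∣ (P - 1) := by
      apply one_sub_prod
      intro t ht
      simp only [Finset.mem_Ico] at ht
      exact Nat.mul_le_mul_left M (by omega)
    have : R * P - 1 = (R - 1) * P + (P - 1) := by ring
    rw [this]
    exact dvd_add (Dvd.dvd.mul_right hR1 _) hP1
  -- combine with the power of X in front
  have hNle : N ≤ jexpN M a i + M*(n-s+1) := by
    have hlb := jexp_lb M a (le_of_lt haM) i
    have hnn := jexp_nonneg M a (le_of_lt haM) i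
    have hcast : ((jexpN M a i : ℕ) : ℤ) = jexp M a i := jexpN_cast M a (le_of_lt haM) i
    have habs : (|i| : ℤ) = (s : ℤ) := by
      rw [hs, Int.abs_eq_natAbs]
    rw [habs] at hlb
    have hMn : (M:ℤ) * ((n:ℤ) - s + 1) = ((M*(n-s+1) : ℕ) : ℤ) := by
      push_cast [hsn]
      ring
    have : (N:ℤ) ≤ (jexpN M a i : ℤ) + (M*(n-s+1) : ℕ) := by
      rw [hcast, ← hMn]
      have h1 : (M:ℤ)*(n:ℤ) ≤ jexp M a i + (M:ℤ)*((n:ℤ) - s + 1) := by nlinarith [hlb]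
      have h2 : (N:ℤ) ≤ (n:ℤ) := by exact_mod_cast hn
      have h3 : (n:ℤ) ≤ (M:ℤ)*(n:ℤ) := by nlinarith [(by exact_mod_cast hM : (1:ℤ) ≤ M)]
      linarith
    exact_mod_cast this
  have step : ((Int.negOnePow i : ℤ) : Polynomial ℤ) * X^(jexpN M a i)
        * (qb (X^M : Polynomial ℤ) (2*n) (((n:ℤ)+i).toNat) * E)
      - ((Int.negOnePow i : ℤ) : Polynomial ℤ) * X^(jexpN M a i)
      = ((Int.negOnePow i : ℤ) : Polynomial ℤ) * (X^(jexpN M a i)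
        * (qb (X^M : Polynomial ℤ) (2*n) (((n:ℤ)+i).toNat) * E - 1)) := by ring
  have goal1 : (X:Polynomial ℤ)^N ∣ X^(jexpN M a i)
      * (qb (X^M : Polynomial ℤ) (2*n) (((n:ℤ)+i).toNat) * E - 1) := by
    have h1 : (X:Polynomial ℤ)^(jexpN M a i + M*(n-s+1)) ∣ X^(jexpN M a i)
        * (qb (X^M : Polynomial ℤ) (2*n) (((n:ℤ)+i).toNat) * E - 1) := by
      rw [pow_add]
      exact mul_dvd_mul_left _ key
    exact dvd_trans (pow_dvd_pow X hNle) h1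
  have goal2 := Dvd.dvd.mul_left goal1 ((Int.negOnePow i : ℤ) : Polynomial ℤ)
  -- match shapes
  have final : E * (((Int.negOnePow i : ℤ) : Polynomial ℤ) * X^(jexpN M a i)
        * qb (X^M : Polynomial ℤ) (2*n) (((n:ℤ)+i).toNat))
      - ((Int.negOnePow i : ℤ) : Polynomial ℤ) * X^(jexpN M a i)
      = ((Int.negOnePow i : ℤ) : Polynomial ℤ) * (X^(jexpN M a i)
        * (qb (X^M : Polynomial ℤ) (2*n) (((n:ℤ)+i).toNat) * E - 1)) := by ring
  rw [final]
  exact goal2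
open Polynomial Finset

/-- truncated geometric series. -/
noncomputable def geom (d N : ℕ) : Polynomial ℤ := ∑ s ∈ range N, X^(d*s)

lemma geom_inv (d N : ℕ) (hd : 1 ≤ d) :
    (X:Polynomial ℤ)^N ∣ ((1 - X^d) * geom d N - 1) := by
  have h := geom_sum_mul (X^d : Polynomial ℤ) N
  have h2 : (1 - X^d : Polynomial ℤ) * geom d N - 1 = -((X^d)^N) := by
    have h3 : geom d N = ∑ i ∈ range N, (X^d : Polynomial ℤ)^i := by
      unfold geom
      exact Finset.sum_congr rfl (fun s _ => by rw [← pow_mul])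
    rw [h3]
    linear_combination -h
  rw [h2, ← pow_mul]
  exact (pow_dvd_pow X (Nat.le_mul_of_pos_left N hd)).neg_right
lemma geom_coeff_nonneg (d N : ℕ) (c : ℕ) : 0 ≤ (geom d N).coeff c := by
  unfold geom
  rw [Polynomial.finset_sum_coeff]
  apply Finset.sum_nonneg
  intro s _
  rw [Polynomial.coeff_X_pow]
  split <;> norm_num

lemma geom_supp3 (k N c : ℕ) (hc : ¬ (3 ∣ c)) : (geom (3*k) N).coeff c = 0 := by
  unfold geom
  rw [Polynomial.finset_sum_coeff]
  apply Finset.sum_eq_zero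
  intro s _
  rw [Polynomial.coeff_X_pow]
  split_ifs with h'
  · exact absurd ⟨k*s, by rw [h']; ring⟩ hc
  · rfl

lemma prod_coeff_nonneg {β : Type*} (s : Finset β) (f : β → Polynomial ℤ)
    (h : ∀ k ∈ s, ∀ c, 0 ≤ (f k).coeff c) : ∀ c, 0 ≤ (∏ k ∈ s, f k).coeff c := by
  induction s using Finset.cons_induction with
  | empty =>
    intro c
    rw [Finset.prod_empty, Polynomial.coeff_one]
    split <;> norm_num
  | cons b s hb ih =>
    intro c
    rw [Finset.prod_cons, Polynomial.coeff_mul]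
    apply Finset.sum_nonneg
    intro p _
    exact mul_nonneg (h b (Finset.mem_cons_self b s) p.1)
      (ih (fun k hk => h k (Finset.mem_cons_of_mem hk)) p.2)

lemma prod_supp3 {β : Type*} (s : Finset β) (f : β → Polynomial ℤ)
    (h : ∀ k ∈ s, ∀ c, ¬ (3 ∣ c) → (f k).coeff c = 0) :
    ∀ c, ¬ (3 ∣ c) → (∏ k ∈ s, f k).coeff c = 0 := by
  induction s using Finset.cons_induction with
  | empty =>
    intro c hc
    rw [Finset.prod_empty, Polynomial.coeff_one]
    split
    · omega
    · rfl
  | cons b s hb ih =>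
    intro c hc
    rw [Finset.prod_cons, Polynomial.coeff_mul]
    apply Finset.sum_eq_zero
    intro p hp
    rw [Finset.HasAntidiagonal.mem_antidiagonal] at hp
    rcases Classical.em (3 ∣ p.1) with h1 | h1
    · have h2 : ¬ (3 ∣ p.2) := by omega
      rw [ih (fun k hk => h k (Finset.mem_cons_of_mem hk)) p.2 h2, mul_zero]
    · rw [h b (Finset.mem_cons_self b s) p.1 h1, zero_mul]

/-- splitting an Icc of ℤ into three residue classes. -/
lemma sum_split3 {A : Type*} [AddCommMonoid A] (T : ℕ) (g : ℤ → A) :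
    ∑ i ∈ Icc (-(3*T:ℤ)) (3*T), g i
      = (∑ j ∈ Icc (-(T:ℤ)) T, g (3*j)) + (∑ j ∈ Icc (-(T:ℤ)) ((T:ℤ)-1), g (3*j+1))
        + (∑ j ∈ Icc (-(T:ℤ)+1) (T:ℤ), g (3*j-1)) := by
  have hA : (∑ j ∈ Icc (-(T:ℤ)) T, g (3*j)) = ∑ i ∈ (Icc (-(T:ℤ)) T).image (fun j => 3*j), g i :=
    (Finset.sum_image (fun a _ b _ h => by omega)).symm
  have hB : (∑ j ∈ Icc (-(T:ℤ)) ((T:ℤ)-1), g (3*j+1))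
      = ∑ i ∈ (Icc (-(T:ℤ)) ((T:ℤ)-1)).image (fun j => 3*j+1), g i :=
    (Finset.sum_image (fun a _ b _ h => by omega)).symm
  have hC : (∑ j ∈ Icc (-(T:ℤ)+1) (T:ℤ), g (3*j-1))
      = ∑ i ∈ (Icc (-(T:ℤ)+1) (T:ℤ)).image (fun j => 3*j-1), g i :=
    (Finset.sum_image (fun a _ b _ h => by omega)).symm
  rw [hA, hB, hC]
  rw [← Finset.sum_union (by
    rw [Finset.disjoint_left]
    intro x hx1 hx2
    simp only [Finset.mem_image, Finset.mem_Icc] at hx1 hx2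
    obtain ⟨a, _, ha⟩ := hx1
    obtain ⟨b, _, hb⟩ := hx2
    omega)]
  rw [← Finset.sum_union (by
    rw [Finset.disjoint_left]
    intro x hx1 hx2
    simp only [Finset.mem_union, Finset.mem_image, Finset.mem_Icc] at hx1 hx2
    obtain ⟨b, _, hb⟩ := hx2
    rcases hx1 with ⟨a, _, ha⟩ | ⟨a, _, ha⟩ <;> omega)]
  apply Finset.sum_congr _ (fun _ _ => rfl)
  ext i
  simp only [Finset.mem_Icc, Finset.mem_union, Finset.mem_image]
  constructor
  · intro hi
    rcases (by omega : i % 3 = 0 ∨ i % 3 = 1 ∨ i % 3 = 2) with h | h | h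
    · exact Or.inl (Or.inl ⟨i/3, by omega, by omega⟩)
    · exact Or.inl (Or.inr ⟨(i-1)/3, by omega, by omega⟩)
    · exact Or.inr ⟨(i+1)/3, by omega, by omega⟩
  · intro hi
    rcases hi with (⟨a, ha1, ha2⟩ | ⟨a, ha1, ha2⟩) | ⟨a, ha1, ha2⟩ <;> omega

/-- peel top and bottom elements of an integer Icc. -/
lemma Icc_top_split {A : Type*} [AddCommMonoid A] (T : ℕ) (g : ℤ → A) (hT : 1 ≤ T) :
    ∑ i ∈ Icc (-(T:ℤ)) (T:ℤ), g i = (∑ i ∈ Icc (-(T:ℤ)) ((T:ℤ)-1), g i) + g T := by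
  have : Icc (-(T:ℤ)) (T:ℤ) = insert (T:ℤ) (Icc (-(T:ℤ)) ((T:ℤ)-1)) := by
    ext i
    simp only [Finset.mem_insert, Finset.mem_Icc]
    omega
  rw [this, Finset.sum_insert (by simp only [Finset.mem_Icc]; omega)]
  rw [add_comm]

lemma Icc_bot_split {A : Type*} [AddCommMonoid A] (T : ℕ) (g : ℤ → A) (hT : 1 ≤ T) :
    ∑ i ∈ Icc (-(T:ℤ)) (T:ℤ), g i = (∑ i ∈ Icc (-(T:ℤ)+1) (T:ℤ), g i) + g (-(T:ℤ)) := by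
  have : Icc (-(T:ℤ)) (T:ℤ) = insert (-(T:ℤ)) (Icc (-(T:ℤ)+1) (T:ℤ)) := by
    ext i
    simp only [Finset.mem_insert, Finset.mem_Icc]
    omega
  rw [this, Finset.sum_insert (by simp only [Finset.mem_Icc]; omega)]
  rw [add_comm]
open Polynomial Finset

/-- regrouping `∏(1-X^{3t}) ∏(1-X^{3j-1}) ∏(1-X^{3j-2}) = ∏_{k≤3n} (1-X^k)`. -/
lemma regroup (n : ℕ) :
    ((∏ t ∈ Icc 1 n, (1 - X^(3*t))) * (∏ j ∈ Icc 1 n, (1 - X^(3*j - 1)))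
      * (∏ j ∈ Icc 1 n, (1 - X^(3*j - 2))) : Polynomial ℤ)
    = ∏ k ∈ Icc 1 (3*n), (1 - X^k) := by
  induction n with
  | zero => simp
  | succ n ih =>
    have h3 : 3*(n+1) = (3*n+1)+1+1 := by ring
    rw [Finset.prod_Icc_succ_top (by omega : 1 ≤ n+1),
      Finset.prod_Icc_succ_top (by omega : 1 ≤ n+1),
      Finset.prod_Icc_succ_top (by omega : 1 ≤ n+1), h3,
      Finset.prod_Icc_succ_top (by omega : 1 ≤ 3*n+1+1+1),
      Finset.prod_Icc_succ_top (by omega : 1 ≤ 3*n+1+1),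
      Finset.prod_Icc_succ_top (by omega : 1 ≤ 3*n+1)]
    rw [← ih]
    have e2 : 3*n+1+1+1 - 1 = 3*n+1+1 := by omega
    have e3 : 3*n+1+1+1 - 2 = 3*n+1 := by omega
    rw [e2, e3]
    ring

/-- converting a triple product of arithmetic progressions into a filtered product. -/
lemma triple_to_filter (T N u v : ℕ) (hu : 1 ≤ u) (huv : u < v) (hv : v ≤ 8) (hT : N ≤ 3*T)
    (hT1 : 1 ≤ T) :
    (X:Polynomial ℤ)^N ∣
      ((∏ t ∈ Icc 1 T, (1 - X^(27*t))) * (∏ t ∈ Icc 1 T, (1 - X^(27*t - 3*u)))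
        * (∏ t ∈ Icc 1 T, (1 - X^(27*t - 3*v)))
      - ∏ k ∈ (Icc 1 (3*T)).filter (fun k => k % 9 = 0 ∨ k % 9 = 9 - u ∨ k % 9 = 9 - v),
          (1 - X^(3*k))) := by
  -- step 1: each factor as a product over an image
  have h1 : (∏ t ∈ Icc 1 T, ((1 : Polynomial ℤ) - X^(27*t)))
      = ∏ k ∈ (Icc 1 T).image (fun t => 9*t), (1 - X^(3*k)) := by
    rw [Finset.prod_image (fun a _ b _ h => by omega)]
    exact Finset.prod_congr rfl (fun t _ => by rw [(by ring : 3*(9*t) = 27*t)])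
  have h2 : (∏ t ∈ Icc 1 T, ((1 : Polynomial ℤ) - X^(27*t - 3*u)))
      = ∏ k ∈ (Icc 1 T).image (fun t => 9*t - u), (1 - X^(3*k)) := by
    rw [Finset.prod_image (fun a _ b _ h => by
      simp only [Finset.mem_coe, Finset.mem_Icc] at *
      omega)]
    apply Finset.prod_congr rfl
    intro t ht
    simp only [Finset.mem_Icc] at ht
    rw [(by omega : 3*(9*t - u) = 27*t - 3*u)]
  have h3 : (∏ t ∈ Icc 1 T, ((1 : Polynomial ℤ) - X^(27*t - 3*v)))
      = ∏ k ∈ (Icc 1 T).image (fun t => 9*t - v), (1 - X^(3*k)) := by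
    rw [Finset.prod_image (fun a _ b _ h => by
      simp only [Finset.mem_coe, Finset.mem_Icc] at *
      omega)]
    apply Finset.prod_congr rfl
    intro t ht
    simp only [Finset.mem_Icc] at ht
    rw [(by omega : 3*(9*t - v) = 27*t - 3*v)]
  set S : Finset ℕ := (((Icc 1 T).image (fun t => 9*t)) ∪ ((Icc 1 T).image (fun t => 9*t - u)))
      ∪ ((Icc 1 T).image (fun t => 9*t - v)) with hS
  have hprod : (∏ t ∈ Icc 1 T, ((1:Polynomial ℤ) - X^(27*t))) * (∏ t ∈ Icc 1 T, (1 - X^(27*t - 3*u)))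
        * (∏ t ∈ Icc 1 T, (1 - X^(27*t - 3*v)))
      = ∏ k ∈ S, (1 - X^(3*k)) := by
    rw [h1, h2, h3, hS]
    rw [← Finset.prod_union (by
      rw [Finset.disjoint_left]
      intro x hx1 hx2
      simp only [Finset.mem_image, Finset.mem_Icc] at hx1 hx2
      obtain ⟨a, ha, ha2⟩ := hx1
      obtain ⟨b, hb, hb2⟩ := hx2
      omega)]
    rw [← Finset.prod_union (by
      rw [Finset.disjoint_left]
      intro x hx1 hx2
      simp only [Finset.mem_union, Finset.mem_image, Finset.mem_Icc] at hx1 hx2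
      obtain ⟨b, hb, hb2⟩ := hx2
      rcases hx1 with ⟨a, ha, ha2⟩ | ⟨a, ha, ha2⟩ <;> omega)]
  rw [hprod]
  -- step 2: compare S with the filtered set
  set F : Finset ℕ := (Icc 1 (3*T)).filter
      (fun k => k % 9 = 0 ∨ k % 9 = 9 - u ∨ k % 9 = 9 - v) with hF
  have hFS : F ⊆ S := by
    intro k hk
    simp only [hF, Finset.mem_filter, Finset.mem_Icc] at hk
    simp only [hS, Finset.mem_union, Finset.mem_image, Finset.mem_Icc]
    obtain ⟨⟨hk1, hk2⟩, hmod⟩ := hk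
    rcases hmod with h | h | h
    · exact Or.inl (Or.inl ⟨k/9, by omega, by omega⟩)
    · exact Or.inl (Or.inr ⟨(k+u)/9, by omega, by omega⟩)
    · exact Or.inr ⟨(k+v)/9, by omega, by omega⟩
  have hbig : ∀ k ∈ S \ F, N ≤ 3*k := by
    intro k hk
    simp only [Finset.mem_sdiff, hS, hF, Finset.mem_union, Finset.mem_image, Finset.mem_Icc,
      Finset.mem_filter, not_and, not_or] at hk
    obtain ⟨hmem, hnot⟩ := hk
    -- k is in one of the classes, and 1 ≤ k; if k ≤ 3T it would be in F
    have hk1 : 1 ≤ k ∧ (k % 9 = 0 ∨ k % 9 = 9 - u ∨ k % 9 = 9 - v) := by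
      rcases hmem with (⟨a, ha, ha2⟩ | ⟨a, ha, ha2⟩) | ⟨a, ha, ha2⟩ <;>
        constructor <;> omega
    have : ¬ (k ≤ 3*T) := by
      intro hle
      have h9 := hnot (by omega)
      omega
    omega
  have hsplit : ∏ k ∈ S, ((1:Polynomial ℤ) - X^(3*k))
      = (∏ k ∈ F, (1 - X^(3*k))) * ∏ k ∈ S \ F, (1 - X^(3*k)) := by
    rw [← Finset.prod_sdiff hFS]
    ring
  rw [hsplit]
  have htail := one_sub_prod (N := N) (S \ F) (fun k => 3*k) hbig
  have : (∏ k ∈ F, ((1:Polynomial ℤ) - X^(3*k))) * (∏ k ∈ S \ F, (1 - X^(3*k)))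
        - ∏ k ∈ F, (1 - X^(3*k))
      = (∏ k ∈ F, (1 - X^(3*k))) * ((∏ k ∈ S \ F, (1 - X^(3*k))) - 1) := by ring
  rw [this]
  exact Dvd.dvd.mul_left htail _
open Polynomial Finset

-- congruence calculus
lemma dvd_sub_trans {d A B C : Polynomial ℤ} (h1 : d ∣ A - B) (h2 : d ∣ B - C) : d ∣ A - C := by
  have := dvd_add h1 h2
  simpa using this

lemma dvd_sub_symm {d A B : Polynomial ℤ} (h : d ∣ A - B) : d ∣ B - A := by
  have := h.neg_right
  simpa using this

lemma dvd_sub_mulr {d A B : Polynomial ℤ} (C : Polynomial ℤ) (h : d ∣ A - B) : d ∣ A*C - B*C := by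
  have := h.mul_right C
  rwa [sub_mul] at this

lemma dvd_sub_add {d A B A' B' : Polynomial ℤ} (h1 : d ∣ A - B) (h2 : d ∣ A' - B') :
    d ∣ (A + A') - (B + B') := by
  have := dvd_add h1 h2
  have e : A - B + (A' - B') = (A + A') - (B + B') := by ring
  rwa [e] at this

lemma dvd_sub_sub {d A B A' B' : Polynomial ℤ} (h1 : d ∣ A - B) (h2 : d ∣ A' - B') :
    d ∣ (A - A') - (B - B') := by
  have := dvd_sub h1 h2
  have e : A - B - (A' - B') = (A - A') - (B - B') := by ring
  rwa [e] at this

-- stabilization of borweinPoly coefficients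
lemma bp_split (n₀ n : ℕ) (h : n₀ ≤ n) :
    borweinPoly n = borweinPoly n₀ *
      ∏ k ∈ Ico (n₀+1) (n+1), ((1 - X ^ (3*k - 2)) * (1 - X ^ (3*k - 1))) := by
  unfold borweinPoly
  rw [← Finset.Ico_add_one_right_eq_Icc, ← Finset.Ico_add_one_right_eq_Icc,
    ← Finset.prod_Ico_consecutive _ (by omega : 1 ≤ n₀+1) (by omega : n₀+1 ≤ n+1)]

lemma stab (m n : ℕ) (h : m + 1 ≤ n) :
    (X:Polynomial ℤ)^(m+1) ∣ borweinPoly n - borweinPoly (m+1) := by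
  rw [bp_split (m+1) n h]
  have htail : (X:Polynomial ℤ)^(m+1) ∣
      (∏ k ∈ Ico (m+2) (n+1), ((1 - X ^ (3*k - 2)) * (1 - X ^ (3*k - 1)))) - 1 := by
    have := prod_congr_dvd (d := (X:Polynomial ℤ)^(m+1)) (Ico (m+2) (n+1))
      (fun k => (1 - X ^ (3*k - 2)) * (1 - X ^ (3*k - 1))) (fun _ => 1) (fun k hk => by
        simp only [Finset.mem_Ico] at hk
        have e : (1 - X ^ (3*k - 2) : Polynomial ℤ) * (1 - X ^ (3*k - 1)) - 1
            = X^(3*k-2) * X^(3*k-1) - X^(3*k-2) - X^(3*k-1) := by ring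
        rw [e]
        have d1 : (X:Polynomial ℤ)^(m+1) ∣ X^(3*k-2) := pow_dvd_pow X (by omega)
        have d2 : (X:Polynomial ℤ)^(m+1) ∣ X^(3*k-1) := pow_dvd_pow X (by omega)
        exact dvd_sub (dvd_sub (d1.mul_right _) d1) d2)
    simpa using this
  have e : borweinPoly (m+1) * (∏ k ∈ Ico (m+2) (n+1), ((1 - X ^ (3*k - 2)) * (1 - X ^ (3*k - 1))))
      - borweinPoly (m+1)
      = borweinPoly (m+1) * ((∏ k ∈ Ico (m+2) (n+1), ((1 - X ^ (3*k - 2)) * (1 - X ^ (3*k - 1)))) - 1) := by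
    ring
  rw [e]
  exact htail.mul_left _

-- parity congruence for negOnePow
lemma negOnePow_congr {a b : ℤ} (h : a % 2 = b % 2) : a.negOnePow = b.negOnePow := by
  rcases Int.even_or_odd b with he | ho
  · rw [Int.negOnePow_even b he, Int.negOnePow_even a (by rw [Int.even_iff] at *; omega)]
  · rw [Int.negOnePow_odd b ho, Int.negOnePow_odd a (by rw [Int.odd_iff] at *; omega)]

-- dissection exponent identities
lemma jexp31_0 (j : ℤ) : jexp 3 1 (3*j) = jexp 27 12 j := by
  have h1 := two_tri (3*j)
  have h2 := two_tri j
  have key : 2 * jexp 3 1 (3*j) = 2 * jexp 27 12 j := by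
    unfold jexp
    push_cast
    linear_combination (3:ℤ)*h1 - 27*h2
  linarith

lemma jexp31_1 (j : ℤ) : jexp 3 1 (3*j+1) = 1 + jexp 27 21 j := by
  have h1 := two_tri (3*j+1)
  have h2 := two_tri j
  have key : 2 * jexp 3 1 (3*j+1) = 2 * (1 + jexp 27 21 j) := by
    unfold jexp
    push_cast
    linear_combination (3:ℤ)*h1 - 27*h2
  linarith

lemma jexp31_2 (j : ℤ) : jexp 3 1 (3*j-1) = 2 + jexp 27 3 j := by
  have h1 := two_tri (3*j-1)
  have h2 := two_tri j
  have key : 2 * jexp 3 1 (3*j-1) = 2 * (2 + jexp 27 3 j) := by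
    unfold jexp
    push_cast
    linear_combination (3:ℤ)*h1 - 27*h2
  linarith

lemma jexpN31_0 (j : ℤ) : jexpN 3 1 (3*j) = jexpN 27 12 j := by
  unfold jexpN
  rw [jexp31_0]

lemma jexpN31_1 (j : ℤ) : jexpN 3 1 (3*j+1) = 1 + jexpN 27 21 j := by
  have h := jexp31_1 j
  have hnn := jexp_nonneg 27 21 (by norm_num) j
  unfold jexpN
  omega

lemma jexpN31_2 (j : ℤ) : jexpN 3 1 (3*j-1) = 2 + jexpN 27 3 j := by
  have h := jexp31_2 j
  have hnn := jexp_nonneg 27 3 (by norm_num) j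
  unfold jexpN
  omega
open Polynomial Finset

lemma theta_split (N T : ℕ) (hT : 1 ≤ T) (hN : N ≤ 27*(T-1)) :
    (X:Polynomial ℤ)^N ∣
      (∑ i ∈ Icc (-(3*(T:ℤ))) (3*(T:ℤ)), ((Int.negOnePow i : ℤ) : Polynomial ℤ) * X^(jexpN 3 1 i))
      - ((∑ j ∈ Icc (-(T:ℤ)) (T:ℤ), ((Int.negOnePow j : ℤ) : Polynomial ℤ) * X^(jexpN 27 12 j))
        - (∑ j ∈ Icc (-(T:ℤ)) (T:ℤ), ((Int.negOnePow j : ℤ) : Polynomial ℤ) * X^(jexpN 27 21 j)) * X^1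
        - (∑ j ∈ Icc (-(T:ℤ)) (T:ℤ), ((Int.negOnePow j : ℤ) : Polynomial ℤ) * X^(jexpN 27 3 j)) * X^2) := by
  have hsplit := sum_split3 T (fun i => ((Int.negOnePow i : ℤ) : Polynomial ℤ) * X^(jexpN 3 1 i))
  rw [hsplit]
  -- identify the three pieces
  have hA : (∑ j ∈ Icc (-(T:ℤ)) (T:ℤ), ((Int.negOnePow (3*j) : ℤ) : Polynomial ℤ) * X^(jexpN 3 1 (3*j)))
      = ∑ j ∈ Icc (-(T:ℤ)) (T:ℤ), ((Int.negOnePow j : ℤ) : Polynomial ℤ) * X^(jexpN 27 12 j) := by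
    apply Finset.sum_congr rfl
    intro j _
    rw [jexpN31_0, negOnePow_congr (a := 3*j) (b := j) (by omega)]
  have hB : (∑ j ∈ Icc (-(T:ℤ)) ((T:ℤ)-1), ((Int.negOnePow (3*j+1) : ℤ) : Polynomial ℤ) * X^(jexpN 3 1 (3*j+1)))
      = -((∑ j ∈ Icc (-(T:ℤ)) ((T:ℤ)-1), ((Int.negOnePow j : ℤ) : Polynomial ℤ) * X^(jexpN 27 21 j)) * X^1) := by
    rw [Finset.sum_mul, ← Finset.sum_neg_distrib]
    apply Finset.sum_congr rfl
    intro j _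
    rw [jexpN31_1]
    have hsgn : (3*j+1).negOnePow = -(j.negOnePow) := by
      rw [negOnePow_congr (a := 3*j+1) (b := j+1) (by omega), Int.negOnePow_succ]
    rw [hsgn, pow_add]
    push_cast
    ring
  have hC : (∑ j ∈ Icc (-(T:ℤ)+1) (T:ℤ), ((Int.negOnePow (3*j-1) : ℤ) : Polynomial ℤ) * X^(jexpN 3 1 (3*j-1)))
      = -((∑ j ∈ Icc (-(T:ℤ)+1) (T:ℤ), ((Int.negOnePow j : ℤ) : Polynomial ℤ) * X^(jexpN 27 3 j)) * X^2) := by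
    rw [Finset.sum_mul, ← Finset.sum_neg_distrib]
    apply Finset.sum_congr rfl
    intro j _
    rw [jexpN31_2]
    have hsgn : (3*j-1).negOnePow = -(j.negOnePow) := by
      rw [negOnePow_congr (a := 3*j-1) (b := j+1) (by omega), Int.negOnePow_succ]
    rw [hsgn, pow_add]
    push_cast
    ring
  rw [hA, hB, hC]
  -- boundary flexing
  have hflex1 : (X:Polynomial ℤ)^N ∣
      (∑ j ∈ Icc (-(T:ℤ)) (T:ℤ), ((Int.negOnePow j : ℤ) : Polynomial ℤ) * X^(jexpN 27 21 j))
      - (∑ j ∈ Icc (-(T:ℤ)) ((T:ℤ)-1), ((Int.negOnePow j : ℤ) : Polynomial ℤ) * X^(jexpN 27 21 j)) := by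
    rw [Icc_top_split T _ hT]
    have e : ∀ (A B : Polynomial ℤ), A + B - A = B := fun A B => by ring
    rw [e]
    apply Dvd.dvd.mul_left
    apply pow_dvd_pow
    have hlb := jexp_lb 27 21 (by norm_num) (T:ℤ)
    have hnn := jexp_nonneg 27 21 (by norm_num) (T:ℤ)
    have habs : |(T:ℤ)| = (T:ℤ) := abs_of_nonneg (by positivity)
    rw [habs] at hlb
    unfold jexpN
    omega
  have hflex2 : (X:Polynomial ℤ)^N ∣
      (∑ j ∈ Icc (-(T:ℤ)) (T:ℤ), ((Int.negOnePow j : ℤ) : Polynomial ℤ) * X^(jexpN 27 3 j))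
      - (∑ j ∈ Icc (-(T:ℤ)+1) (T:ℤ), ((Int.negOnePow j : ℤ) : Polynomial ℤ) * X^(jexpN 27 3 j)) := by
    rw [Icc_bot_split T _ hT]
    have e : ∀ (A B : Polynomial ℤ), A + B - A = B := fun A B => by ring
    rw [e]
    apply Dvd.dvd.mul_left
    apply pow_dvd_pow
    have hlb := jexp_lb 27 3 (by norm_num) (-(T:ℤ))
    have hnn := jexp_nonneg 27 3 (by norm_num) (-(T:ℤ))
    have habs : |(-(T:ℤ))| = (T:ℤ) := by
      rw [abs_neg]
      exact abs_of_nonneg (by positivity)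
    rw [habs] at hlb
    unfold jexpN
    omega
  obtain ⟨c1, hc1⟩ := hflex1
  obtain ⟨c2, hc2⟩ := hflex2
  exact ⟨c1*X^1 + c2*X^2, by linear_combination hc1 * X^1 + hc2 * X^2⟩
open Polynomial Finset

/-- The sign pattern `+,−,−,+,−,−,...` of the coefficients of
`(q;q)_∞/(q^3;q^3)_∞`. -/
theorem borwein_infinite_sign (m : ℕ) :
    (m % 3 = 0 → 0 ≤ borweinInfCoeff m) ∧
    (m % 3 ≠ 0 → borweinInfCoeff m ≤ 0) := by
  set N : ℕ := m + 1 with hNdef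
  set T : ℕ := N + 1 with hTdef
  have hpent := jtp 3 1 N (3*T) (by norm_num) (by norm_num) (by omega)
  have hjtp0 := jtp 27 12 N T (by norm_num) (by norm_num) (by omega)
  have hjtp1 := jtp 27 21 N T (by norm_num) (by norm_num) (by omega)
  have hjtp2 := jtp 27 3 N T (by norm_num) (by norm_num) (by omega)
  have httf0 := triple_to_filter T N 4 5 (by norm_num) (by norm_num) (by norm_num) (by omega) (by omega)
  have httf1 := triple_to_filter T N 2 7 (by norm_num) (by norm_num) (by norm_num) (by omega) (by omega)
  have httf2 := triple_to_filter T N 1 8 (by norm_num) (by norm_num) (by norm_num) (by omega) (by omega)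
  norm_num [-Int.coe_negOnePow] at hpent hjtp0 hjtp1 hjtp2 httf0 httf1 httf2
  have hts := theta_split N T (by omega) (by omega)
  set B : Polynomial ℤ := borweinPoly (3*T) with hBdef
  set E : Polynomial ℤ := ∏ t ∈ Icc 1 (3*T), (1 - X^(3*t)) with hEdef
  have hBE : B * E = (∏ t ∈ Icc 1 (3*T), ((1:Polynomial ℤ) - X^(3*t)))
      * (∏ j ∈ Icc 1 (3*T), (1 - X^(3*j - 1))) * (∏ j ∈ Icc 1 (3*T), (1 - X^(3*j - 2))) := by
    rw [hBdef]
    unfold borweinPoly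
    rw [Finset.prod_mul_distrib, hEdef]
    ring
  push_cast at hpent
  -- B*E ≡ pentagonal theta sum
  have h1 : (X:Polynomial ℤ)^N ∣ B*E
      - (∑ i ∈ Icc (-(3*(T:ℤ))) (3*(T:ℤ)), ((Int.negOnePow i : ℤ) : Polynomial ℤ) * X^(jexpN 3 1 i)) := by
    rw [hBE]
    exact hpent
  have h2 := dvd_sub_trans h1 hts
  -- Θc ≡ Fc (filtered products)
  have hF0 := dvd_sub_trans (dvd_sub_symm hjtp0) httf0
  have hF1 := dvd_sub_trans (dvd_sub_symm hjtp1) (by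
    have e : ((∏ t ∈ Icc 1 T, ((1:Polynomial ℤ) - X^(27*t))) * (∏ t ∈ Icc 1 T, (1 - X^(27*t - 6)))
        * (∏ t ∈ Icc 1 T, (1 - X^(27*t - 21))))
        = ((∏ t ∈ Icc 1 T, ((1:Polynomial ℤ) - X^(27*t))) * (∏ t ∈ Icc 1 T, (1 - X^(27*t - 21)))
        * (∏ t ∈ Icc 1 T, (1 - X^(27*t - 6)))) := by ring
    rw [e] at httf1
    exact httf1)
  have hF2 := dvd_sub_trans (dvd_sub_symm hjtp2) httf2
  -- geometric inverse
  set V : Polynomial ℤ := ∏ k ∈ Icc 1 (3*T), geom (3*k) N with hVdef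
  have hEV : (X:Polynomial ℤ)^N ∣ E*V - 1 := by
    rw [hEdef, hVdef, ← Finset.prod_mul_distrib]
    have := prod_congr_dvd (d := (X:Polynomial ℤ)^N) (Icc 1 (3*T))
      (fun k => (1-X^(3*k)) * geom (3*k) N) (fun _ => 1)
      (fun k hk => by
        have hk1 : 1 ≤ k := (Finset.mem_Icc.mp hk).1
        exact geom_inv (3*k) N (by omega))
    simpa using this
  have hFV : ∀ (p : ℕ → Prop) (hp : DecidablePred p),
      (X:Polynomial ℤ)^N ∣ (∏ k ∈ (Icc 1 (3*T)).filter p, (1-X^(3*k))) * V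
        - ∏ k ∈ (Icc 1 (3*T)).filter (fun k => ¬ p k), geom (3*k) N := by
    intro p hp
    have hsplitV : V = (∏ k ∈ (Icc 1 (3*T)).filter p, geom (3*k) N)
        * ∏ k ∈ (Icc 1 (3*T)).filter (fun k => ¬ p k), geom (3*k) N := by
      rw [hVdef]
      exact (Finset.prod_filter_mul_prod_filter_not _ _ _).symm
    have hW : (X:Polynomial ℤ)^N ∣ (∏ k ∈ (Icc 1 (3*T)).filter p, (1-X^(3*k)))
        * (∏ k ∈ (Icc 1 (3*T)).filter p, geom (3*k) N) - 1 := by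
      rw [← Finset.prod_mul_distrib]
      have := prod_congr_dvd (d := (X:Polynomial ℤ)^N) ((Icc 1 (3*T)).filter p)
        (fun k => (1-X^(3*k)) * geom (3*k) N) (fun _ => 1)
        (fun k hk => by
          have hk1 : 1 ≤ k := (Finset.mem_Icc.mp (Finset.mem_filter.mp hk).1).1
          exact geom_inv (3*k) N (by omega))
      simpa using this
    obtain ⟨c, hc⟩ := hW
    refine ⟨c * ∏ k ∈ (Icc 1 (3*T)).filter (fun k => ¬ p k), geom (3*k) N, ?_⟩
    linear_combination (∏ k ∈ (Icc 1 (3*T)).filter (fun k => ¬ p k), geom (3*k) N) * hc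
      + (∏ k ∈ (Icc 1 (3*T)).filter p, (1-X^(3*k))) * hsplitV
  have hFV0 := hFV (fun k => k % 9 = 0 ∨ k % 9 = 5 ∨ k % 9 = 4) inferInstance
  have hFV1 := hFV (fun k => k % 9 = 0 ∨ k % 9 = 7 ∨ k % 9 = 2) inferInstance
  have hFV2 := hFV (fun k => k % 9 = 0 ∨ k % 9 = 8 ∨ k % 9 = 1) inferInstance
  set F0p : Polynomial ℤ := ∏ k ∈ (Icc 1 (3*T)).filter (fun k => k % 9 = 0 ∨ k % 9 = 5 ∨ k % 9 = 4), (1-X^(3*k)) with hF0pdef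
  set F1p : Polynomial ℤ := ∏ k ∈ (Icc 1 (3*T)).filter (fun k => k % 9 = 0 ∨ k % 9 = 7 ∨ k % 9 = 2), (1-X^(3*k)) with hF1pdef
  set F2p : Polynomial ℤ := ∏ k ∈ (Icc 1 (3*T)).filter (fun k => k % 9 = 0 ∨ k % 9 = 8 ∨ k % 9 = 1), (1-X^(3*k)) with hF2pdef
  set G0p : Polynomial ℤ := ∏ k ∈ (Icc 1 (3*T)).filter (fun k => ¬(k % 9 = 0 ∨ k % 9 = 5 ∨ k % 9 = 4)), geom (3*k) N with hG0pdef
  set G1p : Polynomial ℤ := ∏ k ∈ (Icc 1 (3*T)).filter (fun k => ¬(k % 9 = 0 ∨ k % 9 = 7 ∨ k % 9 = 2)), geom (3*k) N with hG1pdef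
  set G2p : Polynomial ℤ := ∏ k ∈ (Icc 1 (3*T)).filter (fun k => ¬(k % 9 = 0 ∨ k % 9 = 8 ∨ k % 9 = 1)), geom (3*k) N with hG2pdef
  set S0 : Polynomial ℤ := ∑ j ∈ Icc (-(T:ℤ)) (T:ℤ), ((Int.negOnePow j : ℤ) : Polynomial ℤ) * X^(jexpN 27 12 j) with hS0def
  set S1 : Polynomial ℤ := ∑ j ∈ Icc (-(T:ℤ)) (T:ℤ), ((Int.negOnePow j : ℤ) : Polynomial ℤ) * X^(jexpN 27 21 j) with hS1def
  set S2 : Polynomial ℤ := ∑ j ∈ Icc (-(T:ℤ)) (T:ℤ), ((Int.negOnePow j : ℤ) : Polynomial ℤ) * X^(jexpN 27 3 j) with hS2def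
  -- h2 : X^N ∣ B*E - (S0 - S1*X^1 - S2*X^2)
  -- hF0 : X^N ∣ S0 - F0p, etc.
  have hBT : (X:Polynomial ℤ)^N ∣ B*E - (F0p - F1p*X^1 - F2p*X^2) :=
    dvd_sub_trans h2 (dvd_sub_sub (dvd_sub_sub hF0 (dvd_sub_mulr (X^1) hF1)) (dvd_sub_mulr (X^2) hF2))
  have hBV : (X:Polynomial ℤ)^N ∣ B - (F0p - F1p*X^1 - F2p*X^2)*V := by
    obtain ⟨cv, hcv⟩ := hEV
    obtain ⟨cb, hcb⟩ := hBT
    exact ⟨-(B*cv) + cb*V, by linear_combination (-(B))*hcv + V*hcb⟩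
  have hGt : (X:Polynomial ℤ)^N ∣ (F0p - F1p*X^1 - F2p*X^2)*V - (G0p - G1p*X^1 - G2p*X^2) := by
    obtain ⟨g0, hg0⟩ := hFV0
    obtain ⟨g1, hg1⟩ := hFV1
    obtain ⟨g2, hg2⟩ := hFV2
    exact ⟨g0 - g1*X^1 - g2*X^2, by linear_combination hg0 - X^1*hg1 - X^2*hg2⟩
  have hfinal := dvd_sub_trans hBV hGt
  -- coefficient extraction
  have hstab := stab m (3*T) (by omega)
  have hco1 : (borweinPoly (3*T)).coeff m = borweinInfCoeff m := by
    have h := (Polynomial.X_pow_dvd_iff.mp hstab) m (by omega)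
    rw [Polynomial.coeff_sub] at h
    unfold borweinInfCoeff
    omega
  have hco2 : B.coeff m = (G0p - G1p*X^1 - G2p*X^2).coeff m := by
    have h := (Polynomial.X_pow_dvd_iff.mp hfinal) m (by omega)
    rw [Polynomial.coeff_sub] at h
    omega
  have hexp : (G0p - G1p*X^1 - G2p*X^2).coeff m
      = G0p.coeff m - (if 1 ≤ m then G1p.coeff (m-1) else 0)
        - (if 2 ≤ m then G2p.coeff (m-2) else 0) := by
    rw [Polynomial.coeff_sub, Polynomial.coeff_sub, Polynomial.coeff_mul_X_pow',
      Polynomial.coeff_mul_X_pow']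
  have hG0nn : ∀ c, 0 ≤ G0p.coeff c := prod_coeff_nonneg _ _ (fun k _ c => geom_coeff_nonneg _ _ c)
  have hG1nn : ∀ c, 0 ≤ G1p.coeff c := prod_coeff_nonneg _ _ (fun k _ c => geom_coeff_nonneg _ _ c)
  have hG2nn : ∀ c, 0 ≤ G2p.coeff c := prod_coeff_nonneg _ _ (fun k _ c => geom_coeff_nonneg _ _ c)
  have hG0s : ∀ c, ¬ (3 ∣ c) → G0p.coeff c = 0 := prod_supp3 _ _ (fun k _ c hc => geom_supp3 k N c hc)
  have hG1s : ∀ c, ¬ (3 ∣ c) → G1p.coeff c = 0 := prod_supp3 _ _ (fun k _ c hc => geom_supp3 k N c hc)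
  have hG2s : ∀ c, ¬ (3 ∣ c) → G2p.coeff c = 0 := prod_supp3 _ _ (fun k _ c hc => geom_supp3 k N c hc)
  have hbic : borweinInfCoeff m = G0p.coeff m - (if 1 ≤ m then G1p.coeff (m-1) else 0)
      - (if 2 ≤ m then G2p.coeff (m-2) else 0) := by
    rw [← hco1]
    rw [hBdef] at hco2
    rw [hco2, hexp]
  constructor
  · intro h3
    have e1 : (if 1 ≤ m then G1p.coeff (m-1) else 0) = 0 := by
      split_ifs with h
      · exact hG1s (m-1) (by omega)
      · rfl
    have e2 : (if 2 ≤ m then G2p.coeff (m-2) else 0) = 0 := by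
      split_ifs with h
      · exact hG2s (m-2) (by omega)
      · rfl
    rw [hbic, e1, e2]
    have := hG0nn m
    omega
  · intro h3
    rcases (by omega : m % 3 = 1 ∨ m % 3 = 2) with h | h
    · have e0 : G0p.coeff m = 0 := hG0s m (by omega)
      have e2 : (if 2 ≤ m then G2p.coeff (m-2) else 0) = 0 := by
        split_ifs with hh
        · exact hG2s (m-2) (by omega)
        · rfl
      have e1 : (if 1 ≤ m then G1p.coeff (m-1) else 0) = G1p.coeff (m-1) := by
        rw [if_pos (by omega)]
      rw [hbic, e0, e1, e2]
      have := hG1nn (m-1)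
      omega
    · have e0 : G0p.coeff m = 0 := hG0s m (by omega)
      have e1 : (if 1 ≤ m then G1p.coeff (m-1) else 0) = 0 := by
        split_ifs with hh
        · exact hG1s (m-1) (by omega)
        · rfl
      have e2 : (if 2 ≤ m then G2p.coeff (m-2) else 0) = G2p.coeff (m-2) := by
        rw [if_pos (by omega)]
      rw [hbic, e0, e1, e2]
      have := hG2nn (m-2)
      omega
end

section
/- The maximum of the function f(s) = 2π/(3√3) − (2/√3)·arctan((1+2s)/√3) + 2s/(1+s+s^2) on [0,1] is attained at s_0 = (√13 − 1)/6, and f(s_0) < 0.8. -/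
set_option maxHeartbeats 1000000

open Set

/-- `f(s) = 2π/(3√3) − (2/√3)·arctan((1+2s)/√3) + 2s/(1+s+s²)`. -/
noncomputable def f7 (s : ℝ) : ℝ :=
  2 * Real.pi / (3 * Real.sqrt 3) - (2 / Real.sqrt 3) * Real.arctan ((1 + 2 * s) / Real.sqrt 3)
    + 2 * s / (1 + s + s ^ 2)

lemma denom_pos (s : ℝ) : (0:ℝ) < 1 + s + s ^ 2 := by nlinarith [sq_nonneg (s + 1/2)]

lemma f7_hasDerivAt (s : ℝ) :
    HasDerivAt f7 ((1 - s - 3 * s ^ 2) / (1 + s + s ^ 2) ^ 2) s := by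
  have h3 : Real.sqrt 3 ^ 2 = 3 := Real.sq_sqrt (by norm_num)
  have hs3 : (0:ℝ) < Real.sqrt 3 := Real.sqrt_pos.mpr (by norm_num)
  have hd := denom_pos s
  have h1 : HasDerivAt (fun s : ℝ => (1 + 2 * s) / Real.sqrt 3) (2 / Real.sqrt 3) s := by
    simpa using (((hasDerivAt_id s).const_mul 2).const_add 1).div_const (Real.sqrt 3)
  have h2 : HasDerivAt (fun s : ℝ => Real.arctan ((1 + 2 * s) / Real.sqrt 3))
      (1 / (1 + ((1 + 2 * s) / Real.sqrt 3) ^ 2) * (2 / Real.sqrt 3)) s :=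
    (Real.hasDerivAt_arctan _).comp s h1
  have h4 : HasDerivAt (fun s : ℝ => 2 * s / (1 + s + s ^ 2))
      ((2 * (1 + s + s ^ 2) - 2 * s * (1 + 2 * s)) / (1 + s + s ^ 2) ^ 2) s := by
    have hn : HasDerivAt (fun s : ℝ => 2 * s) 2 s := by
      simpa using (hasDerivAt_id s).const_mul 2
    have hdd : HasDerivAt (fun s : ℝ => 1 + s + s ^ 2) (1 + 2 * s) s := by
      have := ((hasDerivAt_id s).const_add 1).add (hasDerivAt_pow 2 s)
      simpa [Pi.add_def] using this
    exact hn.div hdd hd.ne'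
  have h5 := ((h2.const_mul (2 / Real.sqrt 3)).const_sub
      (2 * Real.pi / (3 * Real.sqrt 3))).add h4
  have hx : 1 + ((1 + 2 * s) / Real.sqrt 3) ^ 2 = 4 * (1 + s + s ^ 2) / 3 := by
    rw [div_pow, h3]; ring
  have h33 : Real.sqrt 3 * Real.sqrt 3 = 3 := Real.mul_self_sqrt (by norm_num)
  have hterm : (2 / Real.sqrt 3) * (1 / (4 * (1 + s + s ^ 2) / 3) * (2 / Real.sqrt 3))
      = 1 / (1 + s + s ^ 2) := by
    rw [show (2 / Real.sqrt 3) * (1 / (4 * (1 + s + s ^ 2) / 3) * (2 / Real.sqrt 3))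
        = (Real.sqrt 3 * Real.sqrt 3)⁻¹ * (4 * (1 + s + s ^ 2) / 3)⁻¹ * 4 by ring, h33]
    rw [eq_div_iff hd.ne']
    field_simp
  refine h5.congr_deriv ?_
  rw [hx, hterm]
  field_simp
  ring

theorem f7_max :
    IsMaxOn f7 (Set.Icc 0 1) ((Real.sqrt 13 - 1) / 6) ∧
    f7 ((Real.sqrt 13 - 1) / 6) < 0.8 := by
  have hb2 : Real.sqrt 13 ^ 2 = 13 := Real.sq_sqrt (by norm_num)
  have hb0 : (0:ℝ) ≤ Real.sqrt 13 := Real.sqrt_nonneg 13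
  have hb_lb : (3.6055512:ℝ) < Real.sqrt 13 := by nlinarith
  have hb_ub : Real.sqrt 13 < 3.6055513 := by nlinarith
  have ha2 : Real.sqrt 3 ^ 2 = 3 := Real.sq_sqrt (by norm_num)
  have ha0 : (0:ℝ) ≤ Real.sqrt 3 := Real.sqrt_nonneg 3
  have ha_lb : (1.7320508:ℝ) < Real.sqrt 3 := by nlinarith
  have ha_ub : Real.sqrt 3 < 1.7320509 := by nlinarith
  set s0 : ℝ := (Real.sqrt 13 - 1) / 6 with hs0def
  have hs0_lb : (0.4342585:ℝ) < s0 := by rw [hs0def]; linarith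
  have hs0_ub : s0 < 0.4342586 := by rw [hs0def]; linarith
  have hkey : 3 * s0 ^ 2 + s0 - 1 = 0 := by
    rw [hs0def]; nlinarith
  have hmem : s0 ∈ Set.Icc (0:ℝ) 1 := ⟨by linarith, by linarith⟩
  constructor
  · -- max part
    have hmono : StrictMonoOn f7 (Icc 0 s0) := by
      apply strictMonoOn_of_deriv_pos (convex_Icc _ _)
      · exact fun x _ => (f7_hasDerivAt x).continuousAt.continuousWithinAt
      · intro x hx
        rw [interior_Icc] at hx
        rw [(f7_hasDerivAt x).deriv]
        apply div_pos
        · nlinarith [hx.1, hx.2, hkey]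
        · exact pow_pos (denom_pos x) 2
    have hanti : StrictAntiOn f7 (Icc s0 1) := by
      apply strictAntiOn_of_deriv_neg (convex_Icc _ _)
      · exact fun x _ => (f7_hasDerivAt x).continuousAt.continuousWithinAt
      · intro x hx
        rw [interior_Icc] at hx
        rw [(f7_hasDerivAt x).deriv]
        apply div_neg_of_neg_of_pos
        · nlinarith [hx.1, hx.2, hkey]
        · exact pow_pos (denom_pos x) 2
    intro x hx
    simp only [Set.mem_setOf_eq]
    rcases le_total x s0 with h | h
    · exact hmono.monotoneOn ⟨hx.1, h⟩ ⟨hmem.1, le_refl _⟩ h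
    · exact hanti.antitoneOn ⟨le_refl _, hmem.2⟩ ⟨h, hx.2⟩ h
  · -- numeric part
    have hd0 := denom_pos s0
    -- lower bound on arctan 1.078 via MVT
    have harct : Real.pi / 4 + 0.036 ≤ Real.arctan 1.078 := by
      obtain ⟨c, hc, hceq⟩ := exists_deriv_eq_slope Real.arctan
        (show (1:ℝ) < 1.078 by norm_num) Real.continuous_arctan.continuousOn
        (fun x _ => (Real.differentiable_arctan x).differentiableWithinAt)
      simp only [Real.deriv_arctan, Real.arctan_one] at hceq
      have hc1 : (1:ℝ) < c := hc.1
      have hc2 : c < 1.078 := hc.2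
      have h5 : (0.462:ℝ) < 1 / (1 + c ^ 2) := by
        rw [lt_div_iff₀ (by positivity)]; nlinarith
      rw [hceq, lt_div_iff₀ (by norm_num : (0:ℝ) < 1.078 - 1)] at h5
      linarith
    have hxge : (1.078:ℝ) ≤ (1 + 2 * s0) / Real.sqrt 3 := by
      rw [le_div_iff₀ (by linarith : (0:ℝ) < Real.sqrt 3)]
      nlinarith
    have hA : Real.pi / 4 + 0.036 ≤ Real.arctan ((1 + 2 * s0) / Real.sqrt 3) :=
      le_trans harct (Real.arctan_strictMono.monotone hxge)
    have hpi_ub : Real.pi < 3.141593 := Real.pi_lt_d6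
    have hpi_lb : (3.141592:ℝ) < Real.pi := Real.pi_gt_d6
    have hT : 2 * s0 / (1 + s0 + s0 ^ 2) < 0.5352 := by
      rw [div_lt_iff₀ hd0]; nlinarith
    have hU : 2 * Real.pi / (3 * Real.sqrt 3) < 1.2092 := by
      rw [div_lt_iff₀ (by linarith : (0:ℝ) < 3 * Real.sqrt 3)]
      nlinarith
    have hV : (0.9484:ℝ) < (2 / Real.sqrt 3) * Real.arctan ((1 + 2 * s0) / Real.sqrt 3) := by
      have h2a : (0:ℝ) < 2 / Real.sqrt 3 := by positivity
      have : (2 / Real.sqrt 3) * (Real.pi / 4 + 0.036) ≤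
          (2 / Real.sqrt 3) * Real.arctan ((1 + 2 * s0) / Real.sqrt 3) :=
        mul_le_mul_of_nonneg_left hA h2a.le
      refine lt_of_lt_of_le ?_ this
      rw [show (2 / Real.sqrt 3) * (Real.pi / 4 + 0.036)
          = (2 * (Real.pi / 4 + 0.036)) / Real.sqrt 3 by ring,
        lt_div_iff₀ (by linarith : (0:ℝ) < Real.sqrt 3)]
      nlinarith
    have : f7 s0 = 2 * Real.pi / (3 * Real.sqrt 3)
        - (2 / Real.sqrt 3) * Real.arctan ((1 + 2 * s0) / Real.sqrt 3)
        + 2 * s0 / (1 + s0 + s0 ^ 2) := rfl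
    rw [this]
    norm_num
    linarith
end

section
/- Let c, d, μ be positive reals with d > c, and let γ(s,a) = ∫_0^a e^{-x} x^{s-1} dx be the lower incomplete gamma function. Then sup_{w>0} w^{-c} γ(d, μw) ≤ μ^c Γ(d−c+1) / (c √(2π(d−c))). -/
open Real

-- A: log(1+1/x) ≥ 2/(2x+1)
lemma log_one_add_inv_ge {x : ℝ} (hx : 0 < x) : 2 / (2 * x + 1) ≤ Real.log (1 + x⁻¹) := by
  have h := Real.hasSum_log_one_add_inv hx
  have h0 : (2 : ℝ) / (2 * x + 1) = (fun k : ℕ => (2 : ℝ) * (1 / (2 * k + 1)) * (1 / (2 * x + 1)) ^ (2 * k + 1)) 0 := by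
    norm_num [div_eq_mul_inv]
  rw [h0]
  exact le_hasSum h 0 (fun i _ => by positivity)

-- pointwise: x^p e^{-x} ≤ (p/e)^p
lemma rpow_mul_exp_neg_le {p x : ℝ} (hp : 0 < p) (hx : 0 < x) :
    x ^ p * Real.exp (-x) ≤ (p / Real.exp 1) ^ p := by
  have h1 : Real.log (x / p) ≤ x / p - 1 := Real.log_le_sub_one_of_pos (by positivity)
  rw [Real.log_div hx.ne' hp.ne'] at h1
  have e1 : x ^ p * Real.exp (-x) = Real.exp (p * Real.log x - x) := by
    rw [Real.rpow_def_of_pos hx, ← Real.exp_add]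
    ring_nf
  have e2 : (p / Real.exp 1) ^ p = Real.exp (p * (Real.log p - 1)) := by
    rw [Real.rpow_def_of_pos (by positivity), Real.log_div hp.ne' (Real.exp_ne_zero 1),
      Real.log_exp]
    ring_nf
  rw [e1, e2]
  apply Real.exp_le_exp.2
  have := mul_le_mul_of_nonneg_left h1 hp.le
  have hxp : p * (x / p) = x := by field_simp
  nlinarith

noncomputable def Kst (s : ℝ) : ℝ := Real.sqrt (2 * π * s) * (s / Real.exp 1) ^ s

lemma Kst_pos {s : ℝ} (hs : 0 < s) : 0 < Kst s := by
  unfold Kst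
  have : 0 < 2 * π * s := by positivity
  positivity

lemma log_Kst {s : ℝ} (hs : 0 < s) :
    Real.log (Kst s) = (Real.log (2 * π) + Real.log s) / 2 + s * (Real.log s - 1) := by
  unfold Kst
  have h1 : (0:ℝ) < 2 * π * s := by positivity
  rw [Real.log_mul (Real.sqrt_ne_zero'.2 h1) (by positivity),
    Real.log_sqrt h1.le, Real.log_rpow (by positivity),
    Real.log_mul (by positivity) hs.ne', Real.log_div hs.ne' (Real.exp_ne_zero 1),
    Real.log_exp]

-- step: (s+1) * K s ≤ K (s+1)
lemma Kst_step {s : ℝ} (hs : 0 < s) : (s + 1) * Kst s ≤ Kst (s + 1) := by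
  have hK : 0 < Kst s := Kst_pos hs
  have hK1 : 0 < Kst (s+1) := Kst_pos (by linarith)
  have hlog : Real.log ((s+1) * Kst s) ≤ Real.log (Kst (s+1)) := by
    rw [Real.log_mul (by positivity) hK.ne', log_Kst hs, log_Kst (by linarith)]
    have hdiff : Real.log (s+1) - Real.log s = Real.log (1 + s⁻¹) := by
      rw [← Real.log_div (by positivity) hs.ne']
      congr 1
      field_simp
    have hA := log_one_add_inv_ge hs
    -- (s+1/2) * log(1+1/s) ≥ 1
    have hB : 1 ≤ (s + 1/2) * Real.log (1 + s⁻¹) := by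
      have h2 : (s + 1/2) * (2 / (2*s+1)) = 1 := by field_simp
      nlinarith [hA, hs]
    nlinarith [hdiff, hB]
  calc (s+1) * Kst s = Real.exp (Real.log ((s+1) * Kst s)) := (Real.exp_log (by positivity)).symm
    _ ≤ Real.exp (Real.log (Kst (s+1))) := Real.exp_le_exp.2 hlog
    _ = Kst (s+1) := Real.exp_log hK1

-- integer Stirling: Kst m ≤ m!
lemma Kst_le_factorial (m : ℕ) (hm : 1 ≤ m) : Kst m ≤ (m.factorial : ℝ) := by
  have hsp : Real.sqrt π ≤ Stirling.stirlingSeq m := by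
    obtain ⟨k, rfl⟩ := Nat.exists_eq_add_of_le hm
    have ha := Stirling.stirlingSeq'_antitone
    have ht : Filter.Tendsto (Stirling.stirlingSeq ∘ Nat.succ) Filter.atTop
        (nhds (Real.sqrt π)) :=
      Stirling.tendsto_stirlingSeq_sqrt_pi.comp (Filter.tendsto_add_atTop_nat 1)
    have := ha.le_of_tendsto ht k
    simpa [Nat.succ_eq_add_one, Nat.add_comm] using this
  have hm' : (0:ℝ) < m := by exact_mod_cast hm
  have hden : 0 < Real.sqrt (2 * m : ℝ) * ((m : ℝ) / Real.exp 1) ^ m := by positivity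
  rw [Stirling.stirlingSeq, le_div_iff₀ hden] at hsp
  have hK : Kst m = Real.sqrt π * (Real.sqrt (2 * m : ℝ) * ((m:ℝ) / Real.exp 1) ^ m) := by
    unfold Kst
    rw [Real.rpow_natCast]
    rw [show (2 : ℝ) * π * m = π * (2 * m) by ring, Real.sqrt_mul pi_pos.le]
    ring
  rw [hK]
  exact hsp

-- chord bound: for 1 ≤ M real, 0 < ρ: log Γ(M+1) + ρ log M ≤ log Γ(M+1+ρ)
lemma log_Gamma_chord {M ρ : ℝ} (hM : 1 ≤ M) (hρ : 0 < ρ) :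
    Real.log (Real.Gamma (M + 1)) + ρ * Real.log M ≤ Real.log (Real.Gamma (M + 1 + ρ)) := by
  have hM0 : (0:ℝ) < M := by linarith
  have h := Real.convexOn_log_Gamma.slope_mono_adjacent
    (Set.mem_Ioi.2 hM0) (Set.mem_Ioi.2 (by linarith : (0:ℝ) < M + 1 + ρ))
    (by linarith : M < M + 1) (by linarith : M + 1 < M + 1 + ρ)
  simp only [Function.comp] at h
  have hG : Real.Gamma (M + 1) = M * Real.Gamma M := Real.Gamma_add_one hM0.ne'
  have hlogG : Real.log (Real.Gamma (M+1)) - Real.log (Real.Gamma M) = Real.log M := by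
    rw [hG, Real.log_mul hM0.ne' (Real.Gamma_pos_of_pos hM0).ne']
    ring
  rw [show M + 1 - M = 1 by ring, show M + 1 + ρ - (M+1) = ρ by ring, div_one] at h
  rw [hlogG] at h
  have := (le_div_iff₀ hρ).1 h
  linarith

-- core: chord + expansion
lemma core {M ρ : ℝ} (hM : 1 ≤ M) (h0 : 0 ≤ ρ) (h1 : ρ < 1)
    (hKM : Kst M ≤ Real.Gamma (M + 1)) (hchord :
      Real.log (Real.Gamma (M + 1)) + ρ * Real.log M ≤ Real.log (Real.Gamma (M + 1 + ρ))) :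
    Kst (M + ρ) ≤ Real.Gamma (M + ρ + 1) * Real.exp (2 / M) := by
  have hM0 : (0:ℝ) < M := by linarith
  have hMρ : (0:ℝ) < M + ρ := by linarith
  have hGpos : 0 < Real.Gamma (M + ρ + 1) := Real.Gamma_pos_of_pos (by linarith)
  -- key log inequality
  have hL : Real.log (M + ρ) - Real.log M = Real.log ((M + ρ) / M) := by
    rw [Real.log_div hMρ.ne' hM0.ne']
  set L := Real.log ((M + ρ) / M) with hLdef
  have hLub : L ≤ ρ / M := by
    have := Real.log_le_sub_one_of_pos (show (0:ℝ) < (M + ρ)/M by positivity)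
    have he : (M + ρ)/M - 1 = ρ / M := by field_simp; ring
    rw [he] at this
    exact this
  have hLnn : 0 ≤ L := by
    apply Real.log_nonneg
    rw [le_div_iff₀ hM0]
    linarith
  -- expansion: log Kst (M+ρ) ≤ log Kst M + ρ log M + 2/M
  have hexp : Real.log (Kst (M + ρ)) ≤ Real.log (Kst M) + ρ * Real.log M + 2 / M := by
    rw [log_Kst hMρ, log_Kst hM0]
    have hlogMρ : Real.log (M + ρ) = Real.log M + L := by rw [← hL]; ring
    rw [hlogMρ]
    have hb1 : (M + ρ + 1/2) * L ≤ (M + ρ + 1/2) * (ρ / M) := by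
      apply mul_le_mul_of_nonneg_left hLub (by linarith)
    have hb2 : (M + ρ + 1/2) * (ρ / M) - ρ ≤ 2 / M := by
      have key : (M + ρ + 1/2) * (ρ / M) - ρ = (ρ*ρ + ρ/2) / M := by
        field_simp; ring
      rw [key]
      gcongr
      nlinarith

    nlinarith [hb1, hb2]
  -- combine
  have hlogKM : Real.log (Kst M) ≤ Real.log (Real.Gamma (M + 1)) :=
    Real.log_le_log (Kst_pos hM0) hKM
  have hfinal : Real.log (Kst (M + ρ)) ≤ Real.log (Real.Gamma (M + ρ + 1)) + 2 / M := by
    have : M + 1 + ρ = M + ρ + 1 := by ring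
    rw [this] at hchord
    linarith
  calc Kst (M + ρ) = Real.exp (Real.log (Kst (M + ρ))) :=
        (Real.exp_log (Kst_pos hMρ)).symm
    _ ≤ Real.exp (Real.log (Real.Gamma (M + ρ + 1)) + 2 / M) := Real.exp_le_exp.2 hfinal
    _ = Real.Gamma (M + ρ + 1) * Real.exp (2 / M) := by
        rw [Real.exp_add, Real.exp_log hGpos]

-- downward induction
lemma down (n : ℕ) : ∀ s : ℝ, 0 < s → ∀ C : ℝ,
    Kst (s + n) ≤ Real.Gamma (s + n + 1) * C → Kst s ≤ Real.Gamma (s + 1) * C := by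
  induction n with
  | zero => intro s hs C h; simpa using h
  | succ k ih =>
    intro s hs C h
    have h' : Kst ((s+1) + k) ≤ Real.Gamma ((s+1) + k + 1) * C := by
      have e : (s+1) + (k:ℝ) = s + ((k:ℕ)+1 : ℕ) := by push_cast; ring
      rw [e]
      have e2 : s + ((k:ℕ)+1 : ℕ) + 1 = s + (((k:ℕ)+1 : ℕ):ℝ) + 1 := by norm_num
      exact h
    have h2 : Kst (s+1) ≤ Real.Gamma (s + 2) * C := by
      have := ih (s+1) (by linarith) C h'
      have e : s + 1 + 1 = s + 2 := by ring
      rwa [e] at this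
    have hstep := Kst_step hs
    have hG : Real.Gamma (s + 2) = (s+1) * Real.Gamma (s+1) := by
      have := Real.Gamma_add_one (s := s+1) (by positivity)
      rw [show s + 1 + 1 = s + 2 by ring] at this
      exact this
    have hs1 : (0:ℝ) < s + 1 := by linarith
    rw [hG] at h2
    calc Kst s ≤ Kst (s+1) / (s+1) := by
          rw [le_div_iff₀ hs1]; linarith [Kst_step hs]
      _ ≤ (s+1) * Real.Gamma (s+1) * C / (s+1) := by gcongr
      _ = Real.Gamma (s+1) * C := by field_simp

-- core applied to a natural m and any ρ ∈ [0,1)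
lemma core_nat (m : ℕ) (hm : 1 ≤ m) (ρ : ℝ) (h0 : 0 ≤ ρ) (h1 : ρ < 1) :
    Kst ((m:ℝ) + ρ) ≤ Real.Gamma ((m:ℝ) + ρ + 1) * Real.exp (2 / m) := by
  have hM : (1:ℝ) ≤ m := by exact_mod_cast hm
  have hKM : Kst m ≤ Real.Gamma ((m:ℝ) + 1) := by
    rw [Real.Gamma_nat_eq_factorial]
    exact Kst_le_factorial m hm
  rcases eq_or_lt_of_le h0 with h | h
  · rw [← h, add_zero]
    have h1e : (1:ℝ) ≤ Real.exp (2/m) := Real.one_le_exp (by positivity)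
    nlinarith [Real.Gamma_pos_of_pos (show (0:ℝ) < (m:ℝ)+1 by positivity), hKM]
  · exact core hM h0 h1 hKM (log_Gamma_chord hM h)

lemma stirling_lower {s : ℝ} (hs : 0 < s) : Kst s ≤ Real.Gamma (s + 1) := by
  have key : ∀ n : ℕ, 1 ≤ n → Kst s ≤ Real.Gamma (s + 1) * Real.exp (2 / n) := by
    intro n hn
    set k := Nat.floor s with hk
    set ρ := s - k with hρ
    have h0 : 0 ≤ ρ := by
      have := Nat.floor_le hs.le
      simp only [hρ]; linarith
    have h1 : ρ < 1 := by
      have := Nat.lt_floor_add_one s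
      simp only [hρ]; linarith
    have hcore := core_nat (k + n) (by omega) ρ h0 h1
    have heq : ((k + n : ℕ) : ℝ) + ρ = s + n := by push_cast; simp only [hρ]; ring
    rw [heq] at hcore
    have hexp : Real.exp (2 / (k + n : ℕ)) ≤ Real.exp (2 / n) := by
      apply Real.exp_le_exp.2
      apply div_le_div_of_nonneg_left (by norm_num) (by positivity) ?_
      exact_mod_cast by omega
    have hcore2 : Kst (s + n) ≤ Real.Gamma (s + n + 1) * Real.exp (2 / n) := by
      refine hcore.trans ?_
      have hGpos : 0 < Real.Gamma (s + n + 1) := Real.Gamma_pos_of_pos (by positivity)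
      exact mul_le_mul_of_nonneg_left hexp hGpos.le
    exact down n s hs _ hcore2
  have hlim : Filter.Tendsto (fun n : ℕ => Real.Gamma (s + 1) * Real.exp (2 / n))
      Filter.atTop (nhds (Real.Gamma (s + 1))) := by
    have h2 : Filter.Tendsto (fun n : ℕ => (2:ℝ) / n) Filter.atTop (nhds 0) :=
      tendsto_const_div_atTop_nhds_zero_nat 2
    have := (Real.continuous_exp.tendsto 0).comp h2
    rw [Real.exp_zero] at this
    have := Filter.Tendsto.const_mul (Real.Gamma (s + 1)) this
    simpa using this
  refine ge_of_tendsto hlim ?_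
  filter_upwards [Filter.eventually_ge_atTop 1] with n hn
  exact key n hn

theorem incompleteGamma_sup_bound (c d μ : ℝ) (hc : 0 < c) (hd : 0 < d) (hμ : 0 < μ)
    (hcd : c < d) :
    ∀ w : ℝ, 0 < w →
      w ^ (-c) * (∫ x in Set.Ioc (0 : ℝ) (μ * w), Real.exp (-x) * x ^ (d - 1)) ≤
        μ ^ c * Real.Gamma (d - c + 1) / (c * Real.sqrt (2 * Real.pi * (d - c))) := by
  intro w hw
  set s : ℝ := d - c with hsdef
  have hs : 0 < s := by simp only [hsdef]; linarith
  set M : ℝ := (s / Real.exp 1) ^ s with hM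
  have hMpos : 0 < M := by
    have : 0 < s / Real.exp 1 := by positivity
    positivity
  set t : ℝ := μ * w with ht
  have htpos : 0 < t := by positivity
  -- integrability
  have hint1 : MeasureTheory.IntegrableOn (fun x => Real.exp (-x) * x ^ (d - 1))
      (Set.Ioc 0 t) := (Real.GammaIntegral_convergent hd).mono_set Set.Ioc_subset_Ioi_self
  have hint2 : MeasureTheory.IntegrableOn (fun x => M * x ^ (c - 1)) (Set.Ioc 0 t) := by
    have h := intervalIntegral.intervalIntegrable_rpow' (a := 0) (b := t)
      (r := c - 1) (by linarith)
    have h2 := (intervalIntegrable_iff_integrableOn_Ioc_of_le htpos.le).mp h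
    exact h2.const_mul M
  -- pointwise bound
  have hpt : ∀ x ∈ Set.Ioc (0:ℝ) t,
      Real.exp (-x) * x ^ (d - 1) ≤ M * x ^ (c - 1) := by
    intro x hx
    have hx0 : 0 < x := hx.1
    have hsplit : x ^ (d - 1) = x ^ (c - 1) * x ^ s := by
      rw [← Real.rpow_add hx0]
      congr 1
      simp only [hsdef]; ring
    rw [hsplit]
    have hb := rpow_mul_exp_neg_le hs hx0
    calc Real.exp (-x) * (x ^ (c-1) * x ^ s) = x ^ (c-1) * (x ^ s * Real.exp (-x)) := by ring
      _ ≤ x ^ (c-1) * M := mul_le_mul_of_nonneg_left hb (Real.rpow_nonneg hx0.le _)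
      _ = M * x ^ (c-1) := by ring
  have hmono := MeasureTheory.setIntegral_mono_on hint1 hint2 measurableSet_Ioc hpt
  -- evaluate RHS integral
  have heval : ∫ x in Set.Ioc (0:ℝ) t, M * x ^ (c - 1) = M * (t ^ c / c) := by
    rw [← intervalIntegral.integral_of_le htpos.le,
      intervalIntegral.integral_const_mul]
    congr 1
    rw [integral_rpow (Or.inl (by linarith : (-1:ℝ) < c - 1))]
    rw [Real.zero_rpow (by linarith : c - 1 + 1 ≠ 0)]
    rw [show c - 1 + 1 = c by ring]
    ring
  -- combine
  have hI : (∫ x in Set.Ioc (0:ℝ) t, Real.exp (-x) * x ^ (d - 1)) ≤ M * (t ^ c / c) := by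
    rw [← heval]; exact hmono
  have hwpow : 0 < w ^ (-c) := Real.rpow_pos_of_pos hw _
  have hstep1 : w ^ (-c) * (∫ x in Set.Ioc (0:ℝ) t, Real.exp (-x) * x ^ (d - 1)) ≤
      w ^ (-c) * (M * (t ^ c / c)) := mul_le_mul_of_nonneg_left hI hwpow.le
  have hsimp : w ^ (-c) * (M * (t ^ c / c)) = μ ^ c * M / c := by
    rw [ht, Real.mul_rpow hμ.le hw.le]
    have : w ^ (-c) * w ^ c = 1 := by
      rw [← Real.rpow_add hw]; simp
    have e : w ^ (-c) * (M * (μ ^ c * w ^ c / c)) = μ ^ c * M / c * (w ^ (-c) * w ^ c) := by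
      ring
    rw [e, this, mul_one]
  -- final comparison with Gamma
  have hsq : 0 < Real.sqrt (2 * π * s) := Real.sqrt_pos.2 (by positivity)
  have hMle : M ≤ Real.Gamma (s + 1) / Real.sqrt (2 * π * s) := by
    rw [le_div_iff₀ hsq]
    have := stirling_lower hs
    unfold Kst at this
    calc M * Real.sqrt (2 * π * s) = Real.sqrt (2 * π * s) * (s / Real.exp 1) ^ s := by
          rw [hM]; ring
      _ ≤ Real.Gamma (s + 1) := this
  have hfin : μ ^ c * M / c ≤ μ ^ c * Real.Gamma (s + 1) / (c * Real.sqrt (2 * π * s)) := by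
    have e1 : μ ^ c * M / c = (μ ^ c / c) * M := by ring
    have e2 : μ ^ c * Real.Gamma (s + 1) / (c * Real.sqrt (2 * π * s)) =
        (μ ^ c / c) * (Real.Gamma (s + 1) / Real.sqrt (2 * π * s)) := by
      field_simp
    rw [e1, e2]
    exact mul_le_mul_of_nonneg_left hMle (by positivity)
  calc w ^ (-c) * (∫ x in Set.Ioc (0:ℝ) t, Real.exp (-x) * x ^ (d - 1)) ≤
        w ^ (-c) * (M * (t ^ c / c)) := hstep1
    _ = μ ^ c * M / c := hsimp
    _ ≤ μ ^ c * Real.Gamma (s + 1) / (c * Real.sqrt (2 * π * s)) := hfin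
end

section
/- Define X_j(n,r) := ∑_{k=1, 3∤k}^{3n} k^j r^k. Then for every n ∈ ℤ⁺ and r ∈ (0,1], X_1(n,r) ≥ r(1+2r+2r^3+r^4)(1−r^{3n})(1−r^{3n/2}) / (1−r^3)^2. -/
/-- `X_j(n,r) = ∑_{k=1, 3∤k}^{3n} k^j r^k`. -/
noncomputable def Xsum (j n : ℕ) (r : ℝ) : ℝ :=
  ∑ k ∈ (Finset.Icc 1 (3 * n)).filter (fun k => ¬ (3 ∣ k)), (k : ℝ) ^ j * r ^ k

lemma amgm_sum (x : ℝ) (hx : 0 ≤ x) (n : ℕ) :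
    (n : ℝ) * x ^ (n - 1) ≤ ∑ m ∈ Finset.range n, (x ^ 2) ^ m := by
  have refl : ∑ m ∈ Finset.range n, (x ^ 2) ^ (n - 1 - m)
      = ∑ m ∈ Finset.range n, (x ^ 2) ^ m :=
    Finset.sum_range_reflect (fun m => (x ^ 2) ^ m) n
  have hterm : ∀ m ∈ Finset.range n,
      2 * x ^ (n - 1) ≤ (x ^ 2) ^ m + (x ^ 2) ^ (n - 1 - m) := by
    intro m hm
    rw [Finset.mem_range] at hm
    have h1 : (x ^ 2) ^ m = x ^ m * x ^ m := by
      rw [← pow_mul, two_mul, pow_add]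
    have h2 : (x ^ 2) ^ (n - 1 - m) = x ^ (n - 1 - m) * x ^ (n - 1 - m) := by
      rw [← pow_mul, two_mul, pow_add]
    have h3 : x ^ (n - 1) = x ^ m * x ^ (n - 1 - m) := by
      rw [← pow_add]; congr 1; omega
    nlinarith [sq_nonneg (x ^ m - x ^ (n - 1 - m))]
  have h := Finset.sum_le_sum hterm
  rw [Finset.sum_add_distrib, refl, Finset.sum_const, Finset.card_range,
    nsmul_eq_mul] at h
  linarith

lemma geom0 (q : ℝ) (n : ℕ) :
    (1 - q) * ∑ m ∈ Finset.range n, q ^ m = 1 - q ^ n := by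
  linear_combination (-1 : ℝ) * geom_sum_mul q n

lemma geom1 (q : ℝ) (n : ℕ) :
    (1 - q) ^ 2 * ∑ m ∈ Finset.range n, (m : ℝ) * q ^ m
      = q * (1 - q ^ n) - (n : ℝ) * q ^ n * (1 - q) := by
  induction n with
  | zero => simp
  | succ n ih =>
    rw [Finset.sum_range_succ]
    push_cast
    linear_combination ih

lemma Xblocks (r : ℝ) (n : ℕ) :
    Xsum 1 n r = ∑ m ∈ Finset.range n,
      (((3 * m + 1 : ℕ) : ℝ) * r ^ (3 * m + 1) + ((3 * m + 2 : ℕ) : ℝ) * r ^ (3 * m + 2)) := by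
  induction n with
  | zero => simp [Xsum]
  | succ n ih =>
    have h2 : (3 * n + 2) ∉ (Finset.Icc 1 (3 * n)).filter (fun k => ¬ (3 ∣ k)) := by
      simp only [Finset.mem_filter, Finset.mem_Icc]
      omega
    have h1 : (3 * n + 1) ∉ insert (3 * n + 2)
        ((Finset.Icc 1 (3 * n)).filter (fun k => ¬ (3 ∣ k))) := by
      simp only [Finset.mem_insert, Finset.mem_filter, Finset.mem_Icc]
      omega
    have hset : (Finset.Icc 1 (3 * (n + 1))).filter (fun k => ¬ (3 ∣ k))
        = insert (3 * n + 1) (insert (3 * n + 2)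
            ((Finset.Icc 1 (3 * n)).filter (fun k => ¬ (3 ∣ k)))) := by
      ext k
      simp only [Finset.mem_filter, Finset.mem_Icc, Finset.mem_insert]
      omega
    simp only [Xsum] at ih ⊢
    rw [hset, Finset.sum_insert h1, Finset.sum_insert h2, ih, Finset.sum_range_succ]
    push_cast
    ring

set_option maxHeartbeats 1000000 in
theorem X1_lower_bound (n : ℕ) (hn : 1 ≤ n) (r : ℝ) (hr : r ∈ Set.Ioc (0 : ℝ) 1) :
    r * (1 + 2 * r + 2 * r ^ 3 + r ^ 4) * (1 - r ^ (3 * n)) *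
        (1 - (Real.sqrt r) ^ (3 * n)) / (1 - r ^ 3) ^ 2 ≤ Xsum 1 n r := by
  obtain ⟨hr0, hr1⟩ := hr
  by_cases hcase : r = 1
  · subst hcase
    have hnum : (1 : ℝ) - 1 ^ (3 * n) = 0 := by norm_num
    rw [hnum]
    norm_num
    exact Finset.sum_nonneg fun k _ => by positivity
  · have hrlt : r < 1 := lt_of_le_of_ne hr1 hcase
    have hq1 : r ^ 3 < 1 := by nlinarith [pow_pos hr0 2, pow_pos hr0 3]
    have hd : (0 : ℝ) < (1 - r ^ 3) ^ 2 := by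
      have : (0:ℝ) < 1 - r ^ 3 := by linarith
      positivity
    rw [div_le_iff₀ hd]
    -- pass to w = r^(1/4)
    set w := Real.sqrt (Real.sqrt r) with hwdef
    have hsr0 : (0 : ℝ) ≤ Real.sqrt r := Real.sqrt_nonneg r
    have hw2 : w ^ 2 = Real.sqrt r := Real.sq_sqrt hsr0
    have hw4 : w ^ 4 = r := by
      rw [show (4 : ℕ) = 2 * 2 from rfl, pow_mul, hw2]
      exact Real.sq_sqrt hr0.le
    have hw0 : 0 < w := Real.sqrt_pos.mpr (Real.sqrt_pos.mpr hr0)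
    have hw1 : w ≤ 1 := by
      nlinarith [hw4, hr1, hw0, sq_nonneg (w - 1), sq_nonneg (w + 1),
        sq_nonneg (w ^ 2 - 1), sq_nonneg (w ^ 2 + 1)]
    set v := w ^ (3 * n) with hv
    have hv0 : (0 : ℝ) ≤ v := by rw [hv]; positivity
    have hv1 : v ≤ 1 := by rw [hv]; exact pow_le_one₀ hw0.le hw1
    have h1' : r ^ (3 * n) = v ^ 4 := by
      rw [hv, ← hw4, ← pow_mul, ← pow_mul]
      congr 1 <;> first | rfl | omega
    have h2' : (Real.sqrt r) ^ (3 * n) = v ^ 2 := by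
      rw [hv, ← hw2, ← pow_mul, ← pow_mul]
      congr 1 <;> first | rfl | omega
    rw [h1', h2', ← hw4]
    -- closed form for Xsum * (1-w^12)^2
    have hqn : ((w : ℝ) ^ 12) ^ n = v ^ 4 := by
      rw [hv, ← pow_mul, ← pow_mul]
      congr 1 <;> first | rfl | omega
    have e1 : Xsum 1 n (w ^ 4) * (1 - w ^ 12) ^ 2
        = 3 * (w ^ 4 + w ^ 8) * (w ^ 12 * (1 - v ^ 4))
          - 3 * (w ^ 4 + w ^ 8) * ((n : ℝ) * v ^ 4 * (1 - w ^ 12))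
          + (w ^ 4 + 2 * w ^ 8) * (1 - v ^ 4) * (1 - w ^ 12) := by
      have hX : Xsum 1 n (w ^ 4)
          = 3 * (w ^ 4 + w ^ 8) * (∑ m ∈ Finset.range n, (m : ℝ) * (w ^ 12) ^ m)
            + (w ^ 4 + 2 * w ^ 8) * (∑ m ∈ Finset.range n, (w ^ 12) ^ m) := by
        rw [Xblocks, Finset.mul_sum, Finset.mul_sum, ← Finset.sum_add_distrib]
        refine Finset.sum_congr rfl fun m _ => ?_
        push_cast
        ring
      have g0 := geom0 (w ^ 12) n
      have g1 := geom1 (w ^ 12) n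
      rw [hqn] at g0 g1
      linear_combination (1 - w ^ 12) ^ 2 * hX + 3 * (w ^ 4 + w ^ 8) * g1
        + (w ^ 4 + 2 * w ^ 8) * (1 - w ^ 12) * g0
    -- the n-term bound
    have hw6 : w ^ 6 ≤ 1 := pow_le_one₀ hw0.le hw1
    have ha := amgm_sum (w ^ 3) (by positivity) n
    have hsq : ((w : ℝ) ^ 3) ^ 2 = w ^ 6 := by ring
    rw [hsq] at ha
    have hg := geom0 (w ^ 6) n
    have hv2 : ((w : ℝ) ^ 6) ^ n = v ^ 2 := by
      rw [hv, ← pow_mul, ← pow_mul]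
      congr 1 <;> first | rfl | omega
    rw [hv2] at hg
    have hc : (0 : ℝ) ≤ (1 - w ^ 6) * w ^ (3 * (n + 1)) :=
      mul_nonneg (by linarith) (by positivity)
    have h5 := mul_le_mul_of_nonneg_right ha hc
    have hp : ((w : ℝ) ^ 3) ^ (n - 1) * w ^ (3 * (n + 1)) = w ^ (6 * n) := by
      rw [← pow_mul, ← pow_add]
      congr 1 <;> first | rfl | omega
    have hp2 : (w : ℝ) ^ (3 * (n + 1)) = v * w ^ 3 := by
      rw [hv, ← pow_add]
      congr 1 <;> first | rfl | omega
    have hp3 : (w : ℝ) ^ (6 * n) = v ^ 2 := by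
      rw [hv, ← pow_mul]
      congr 1 <;> first | rfl | omega
    have key0 : (n : ℝ) * (1 - w ^ 6) * v ^ 2 ≤ (1 - v ^ 2) * (v * w ^ 3) := by
      have hL : (n : ℝ) * (w ^ 3) ^ (n - 1) * ((1 - w ^ 6) * w ^ (3 * (n + 1)))
          = (n : ℝ) * (1 - w ^ 6) * v ^ 2 := by
        rw [← hp3]
        linear_combination ((n : ℝ) * (1 - w ^ 6)) * hp
      have hR : (∑ m ∈ Finset.range n, ((w : ℝ) ^ 6) ^ m) * ((1 - w ^ 6) * w ^ (3 * (n + 1)))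
          = (1 - v ^ 2) * (v * w ^ 3) := by
        rw [← hp2]
        linear_combination (w ^ (3 * (n + 1))) * hg
      calc (n : ℝ) * (1 - w ^ 6) * v ^ 2
          = (n : ℝ) * (w ^ 3) ^ (n - 1) * ((1 - w ^ 6) * w ^ (3 * (n + 1))) := hL.symm
        _ ≤ (∑ m ∈ Finset.range n, ((w : ℝ) ^ 6) ^ m) * ((1 - w ^ 6) * w ^ (3 * (n + 1))) := h5
        _ = (1 - v ^ 2) * (v * w ^ 3) := hR
    have hbound : (n : ℝ) * v ^ 4 * (1 - w ^ 12) ≤ w ^ 3 * (1 + w ^ 6) * v ^ 3 * (1 - v ^ 2) := by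
      have h6 := mul_le_mul_of_nonneg_right key0
        (show (0 : ℝ) ≤ (1 + w ^ 6) * v ^ 2 by positivity)
      nlinarith [h6]
    have step := mul_le_mul_of_nonneg_left hbound
      (show (0 : ℝ) ≤ 3 * (w ^ 4 + w ^ 8) by positivity)
    -- final positivity piece
    have hE : (0 : ℝ) ≤ 2 * (1 + 2 * w ^ 4 + 2 * w ^ 12 + w ^ 16)
        - 3 * w ^ 3 * (1 + w ^ 4) * (1 + w ^ 6) := by
      have hfac : 2 * (1 + 2 * w ^ 4 + 2 * w ^ 12 + w ^ 16)
          - 3 * w ^ 3 * (1 + w ^ 4) * (1 + w ^ 6)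
          = (1 - w) ^ 2 * (2 + 4 * w + 6 * w ^ 2 + 5 * w ^ 3 + 8 * w ^ 4 + 11 * w ^ 5
            + 14 * w ^ 6 + 14 * w ^ 7 + 14 * w ^ 8 + 11 * w ^ 9 + 8 * w ^ 10 + 5 * w ^ 11
            + 6 * w ^ 12 + 4 * w ^ 13 + 2 * w ^ 14) := by ring
      rw [hfac]
      have h := hw0.le
      have hQ : (0 : ℝ) ≤ 2 + 4 * w + 6 * w ^ 2 + 5 * w ^ 3 + 8 * w ^ 4 + 11 * w ^ 5
          + 14 * w ^ 6 + 14 * w ^ 7 + 14 * w ^ 8 + 11 * w ^ 9 + 8 * w ^ 10 + 5 * w ^ 11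
          + 6 * w ^ 12 + 4 * w ^ 13 + 2 * w ^ 14 := by
        have p1 := pow_nonneg h 1
        have p3 := pow_nonneg h 3
        have p5 := pow_nonneg h 5
        have p7 := pow_nonneg h 7
        have p9 := pow_nonneg h 9
        have p11 := pow_nonneg h 11
        have p13 := pow_nonneg h 13
        have q2 := sq_nonneg (w)
        have e2 := pow_nonneg h 2
        have e4 := pow_nonneg h 4
        have e6 := pow_nonneg h 6
        have e8 := pow_nonneg h 8
        have e10 := pow_nonneg h 10
        have e12 := pow_nonneg h 12
        have e14 := pow_nonneg h 14
        linarith [p1, p3, p5, p7, p9, p11, p13, e2, e4, e6, e8, e10, e12, e14]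
      exact mul_nonneg (sq_nonneg _) hQ
    have hK : (0 : ℝ) ≤ 1 + 2 * w ^ 4 + 2 * w ^ 12 + w ^ 16 := by positivity
    have hinner : (0 : ℝ) ≤ (1 + 2 * w ^ 4 + 2 * w ^ 12 + w ^ 16) * (1 + v ^ 2)
        - 3 * w ^ 3 * (1 + w ^ 4) * (1 + w ^ 6) * v := by
      linarith [mul_nonneg hv0 hE, mul_nonneg hK (sq_nonneg (1 - v))]
    have h1v : (0 : ℝ) ≤ 1 - v ^ 2 := by nlinarith [hv0, hv1]
    have e3 : (0 : ℝ) ≤ w ^ 4 * (1 - v ^ 2) * v ^ 2 *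
        ((1 + 2 * w ^ 4 + 2 * w ^ 12 + w ^ 16) * (1 + v ^ 2)
          - 3 * w ^ 3 * (1 + w ^ 4) * (1 + w ^ 6) * v) :=
      mul_nonneg (mul_nonneg (mul_nonneg (by positivity) h1v) (sq_nonneg v)) hinner
    linarith [e1, step, e3]
end

section
/- Define X_j(n,r) := ∑_{k=1, 3∤k}^{3n} k^j r^k. Then for all n ≥ 1 and r ∈ (0,1]: X_0(n,r)^2 / (r X_1(n,r)) ≤ 4/3. -/
lemma Xsum_succ (j n : ℕ) (r : ℝ) :
    Xsum j (n + 1) r = Xsum j n r + ((3 * n + 1 : ℕ) : ℝ) ^ j * r ^ (3 * n + 1)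
      + ((3 * n + 2 : ℕ) : ℝ) ^ j * r ^ (3 * n + 2) := by
  unfold Xsum
  have h : (Finset.Icc 1 (3 * (n + 1))).filter (fun k => ¬ (3 ∣ k)) =
      insert (3 * n + 2) (insert (3 * n + 1)
        ((Finset.Icc 1 (3 * n)).filter (fun k => ¬ (3 ∣ k)))) := by
    ext k
    simp only [Finset.mem_insert, Finset.mem_filter, Finset.mem_Icc]
    omega
  have h1 : (3 * n + 1) ∉ (Finset.Icc 1 (3 * n)).filter (fun k => ¬ (3 ∣ k)) := by
    simp only [Finset.mem_filter, Finset.mem_Icc]; omega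
  have h2 : (3 * n + 2) ∉ insert (3 * n + 1)
      ((Finset.Icc 1 (3 * n)).filter (fun k => ¬ (3 ∣ k))) := by
    simp only [Finset.mem_insert, Finset.mem_filter, Finset.mem_Icc]; omega
  rw [h, Finset.sum_insert h2, Finset.sum_insert h1]
  ring

lemma Xsum_zero_eq (n : ℕ) (r : ℝ) :
    Xsum 0 n r = (r + r ^ 2) * ∑ i ∈ Finset.range n, r ^ (3 * i) := by
  induction n with
  | zero => simp [Xsum]
  | succ n ih =>
    rw [Xsum_succ, ih, Finset.sum_range_succ]
    simp only [pow_zero]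
    ring

lemma key_ineq (n : ℕ) (r S p : ℝ) (hr0 : 0 < r) (hr1 : r ≤ 1)
    (hS0 : 0 ≤ S) (hSn : S ≤ (n : ℝ)) (hp0 : 0 ≤ p) (hp1 : p ≤ 1) :
    6 * (1 + r) ^ 2 * S + 3 * p * (1 + r) ^ 2
      ≤ 4 * (3 * (n : ℝ) + 1) + 4 * (3 * (n : ℝ) + 2) * r := by
  have h1 : 6 * (1 + r) ^ 2 * S ≤ 6 * (1 + r) ^ 2 * (n : ℝ) := by nlinarith
  have h2 : 3 * p * (1 + r) ^ 2 ≤ 3 * (1 + r) ^ 2 := by nlinarith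
  have h3 : 0 ≤ (1 - r) * ((6 * (n : ℝ) + 3) * r + 6 * (n : ℝ) + 1) := by
    have hn0 : (0:ℝ) ≤ (n : ℝ) := Nat.cast_nonneg n
    have : 0 ≤ (6 * (n : ℝ) + 3) * r + 6 * (n : ℝ) + 1 := by positivity
    exact mul_nonneg (by linarith) this
  nlinarith

lemma main_ineq (n : ℕ) (r : ℝ) (hr0 : 0 < r) (hr1 : r ≤ 1) :
    3 * (Xsum 0 n r) ^ 2 ≤ 4 * (r * Xsum 1 n r) := by
  induction n with
  | zero => simp [Xsum]
  | succ n ih =>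
    rw [Xsum_succ 0, Xsum_succ 1]
    set S := ∑ i ∈ Finset.range n, r ^ (3 * i) with hSdef
    have hA : Xsum 0 n r = (r + r ^ 2) * S := Xsum_zero_eq n r
    have hS0 : 0 ≤ S := Finset.sum_nonneg fun i _ => by positivity
    have hSn : S ≤ (n : ℝ) := by
      calc S ≤ ∑ _i ∈ Finset.range n, (1 : ℝ) :=
        Finset.sum_le_sum fun i _ => pow_le_one₀ hr0.le hr1
      _ = (n : ℝ) := by simp
    have hp0 : 0 ≤ r ^ (3 * n) := by positivity
    have hp1 : r ^ (3 * n) ≤ 1 := pow_le_one₀ hr0.le hr1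
    have key := key_ineq n r S (r ^ (3 * n)) hr0 hr1 hS0 hSn hp0 hp1
    have hkey2 := mul_le_mul_of_nonneg_left key
      (show (0:ℝ) ≤ r ^ (3 * n) * r ^ 2 by positivity)
    have hpow1 : r ^ (3 * n + 1) = r ^ (3 * n) * r := by ring
    have hpow2 : r ^ (3 * n + 2) = r ^ (3 * n) * r ^ 2 := by ring
    rw [hpow1, hpow2, hA]
    push_cast
    simp only [pow_zero, pow_one]
    have ih' : 3 * ((r + r ^ 2) * S) ^ 2 ≤ 4 * (r * Xsum 1 n r) := by rw [← hA]; exact ih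
    have e1 : 3 * ((r + r ^ 2) * S + 1 * (r ^ (3 * n) * r) + 1 * (r ^ (3 * n) * r ^ 2)) ^ 2
        = 3 * ((r + r ^ 2) * S) ^ 2
          + r ^ (3 * n) * r ^ 2 * (6 * (1 + r) ^ 2 * S + 3 * r ^ (3 * n) * (1 + r) ^ 2) := by
      ring
    have e2 : 4 * (r * (Xsum 1 n r + (3 * (n : ℝ) + 1) * (r ^ (3 * n) * r)
          + (3 * (n : ℝ) + 2) * (r ^ (3 * n) * r ^ 2)))
        = 4 * (r * Xsum 1 n r)
          + r ^ (3 * n) * r ^ 2 * (4 * (3 * (n : ℝ) + 1) + 4 * (3 * (n : ℝ) + 2) * r) := by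
      ring
    rw [e1, e2]
    linarith [ih', hkey2]

theorem X0_sq_div_X1 (n : ℕ) (hn : 1 ≤ n) (r : ℝ) (hr : r ∈ Set.Ioc (0 : ℝ) 1) :
    (Xsum 0 n r) ^ 2 / (r * Xsum 1 n r) ≤ 4 / 3 := by
  obtain ⟨hr0, hr1⟩ := hr
  have hX1 : r ≤ Xsum 1 n r := by
    have h1mem : 1 ∈ (Finset.Icc 1 (3 * n)).filter (fun k => ¬ (3 ∣ k)) := by
      simp only [Finset.mem_filter, Finset.mem_Icc]
      omega
    have := Finset.single_le_sum (f := fun (k : ℕ) => (k : ℝ) ^ 1 * r ^ k)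
      (fun k _ => mul_nonneg (pow_nonneg (Nat.cast_nonneg k) 1) (pow_nonneg hr0.le k)) h1mem
    simpa [Xsum] using this
  have hpos : 0 < r * Xsum 1 n r := mul_pos hr0 (lt_of_lt_of_le hr0 hX1)
  rw [div_le_div_iff₀ hpos (by norm_num : (0:ℝ) < 3)]
  have := main_ineq n r hr0 hr1
  linarith
end

section
/- Define X_j(n,r) := ∑_{k=1, 3∤k}^{3n} k^j r^k. Then for all n ≥ 1 and r ∈ (0,1]: r^2 X_2(n,r) / X_0(n,r)^3 ≤ 9/2. -/
open Finset

section Helpers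

lemma sumT (q : ℕ) : 2 * ∑ i ∈ range q, i + q = q * q := by
  induction q with
  | zero => simp
  | succ q ih =>
    rw [sum_range_succ]
    zify at ih ⊢
    linear_combination ih

lemma sumS2 (q : ℕ) : 6 * ∑ i ∈ range q, i ^ 2 + 3 * q ^ 2 = 2 * q ^ 3 + q := by
  induction q with
  | zero => simp
  | succ q ih =>
    rw [sum_range_succ]
    zify at ih ⊢
    push_cast
    linear_combination ih

lemma sumV (q : ℕ) : 6 * ∑ u ∈ range q, (∑ j ∈ range (u + 1), j) + q = q ^ 3 := by
  induction q with
  | zero => simp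
  | succ q ih =>
    rw [sum_range_succ]
    have h1 := sumT (q + 1)
    zify at ih h1 ⊢
    push_cast at ih h1 ⊢
    linear_combination ih + 3 * h1

lemma tri_s14 (g : ℕ → ℕ) (q : ℕ) :
    ∑ i ∈ range q, ∑ j ∈ range (q - i), g j = ∑ u ∈ range q, ∑ j ∈ range (u + 1), g j := by
  induction q with
  | zero => simp
  | succ q ih =>
    have h : ∀ i ∈ range (q + 1), ∑ j ∈ range (q + 1 - i), g j
        = ∑ j ∈ range (q - i), g j + (if i ≤ q then g (q - i) else 0) := by
      intro i hi
      rw [mem_range] at hi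
      have h1 : i ≤ q := by omega
      rw [if_pos h1, show q + 1 - i = (q - i) + 1 by omega, sum_range_succ]
    rw [sum_congr rfl h, sum_add_distrib]
    have h2 : ∑ i ∈ range (q + 1), ∑ j ∈ range (q - i), g j
        = ∑ i ∈ range q, ∑ j ∈ range (q - i), g j := by
      rw [sum_range_succ]; simp
    have h3 : ∑ i ∈ range (q + 1), (if i ≤ q then g (q - i) else 0)
        = ∑ j ∈ range (q + 1), g j := by
      rw [← sum_range_reflect (fun j => g j) (q + 1)]
      apply sum_congr rfl
      intro i hi
      rw [mem_range] at hi
      rw [if_pos (by omega)]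
      congr 1 <;> omega
    rw [h2, h3, ih, sum_range_succ (fun u => ∑ j ∈ range (u + 1), g j) q,
      sum_range_succ g q]

lemma sum_ite_range {n K : ℕ} (hK : K ≤ n) (g : ℕ → ℕ) (P : ℕ → Prop) [DecidablePred P]
    (hP : ∀ i, P i ↔ i < K) :
    ∑ i ∈ range n, (if P i then g i else 0) = ∑ i ∈ range K, g i := by
  have h1 : ∀ i ∈ range n, (if P i then g i else 0) = (if i ∈ range K then g i else 0) := by
    intro i _
    by_cases h : P i
    · rw [if_pos h, if_pos (by rw [mem_range]; exact (hP i).1 h)]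
    · rw [if_neg h, if_neg (by rw [mem_range]; exact fun hc => h ((hP i).2 hc))]
  rw [sum_congr rfl h1, sum_ite_mem]
  have h2 : range n ∩ range K = range K := by
    ext x
    simp only [mem_inter, mem_range]
    omega
  rw [h2]

lemma telescope_geo (r : ℝ) (n : ℕ) : ∑ m ∈ range n, (r ^ m - r ^ (m + 1)) = 1 - r ^ n := by
  induction n with
  | zero => simp
  | succ n ih => rw [sum_range_succ, ih]; ring

lemma telescope (r : ℝ) (e N : ℕ) (h : e ≤ N) :
    r ^ e = r ^ N + ∑ m ∈ range N, (if e ≤ m then r ^ m - r ^ (m + 1) else 0) := by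
  have h1 : ∑ m ∈ range N, (if e ≤ m then r ^ m - r ^ (m + 1) else 0)
      = ∑ m ∈ Ico e N, (r ^ m - r ^ (m + 1)) := by
    rw [← sum_filter]
    congr 1
    ext m
    simp only [mem_filter, mem_range, mem_Ico]
    omega
  have h2 : ∑ m ∈ Ico e N, (r ^ m - r ^ (m + 1))
      = ∑ m ∈ range N, (r ^ m - r ^ (m + 1)) - ∑ m ∈ range e, (r ^ m - r ^ (m + 1)) :=
    Finset.sum_Ico_eq_sub _ h
  rw [h1, h2, telescope_geo, telescope_geo]
  ring

lemma expand_sum {α : Type*} (s : Finset α) (e : α → ℕ) (w : α → ℝ) (r : ℝ) (N : ℕ)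
    (he : ∀ i ∈ s, e i ≤ N) :
    ∑ i ∈ s, w i * r ^ e i
      = (∑ i ∈ s, w i) * r ^ N
        + ∑ m ∈ range N, (r ^ m - r ^ (m + 1)) * ∑ i ∈ s.filter (fun i => e i ≤ m), w i := by
  have h : ∀ i ∈ s, w i * r ^ e i
      = w i * r ^ N + ∑ m ∈ range N, (if e i ≤ m then w i * (r ^ m - r ^ (m + 1)) else 0) := by
    intro i hi
    rw [telescope r (e i) N (he i hi), mul_add, mul_sum]
    congr 1
    apply sum_congr rfl
    intro m _
    rw [mul_ite, mul_zero]
  rw [sum_congr rfl h, sum_add_distrib, ← sum_mul, sum_comm]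
  congr 1
  apply sum_congr rfl
  intro m _
  rw [← sum_filter, mul_sum]
  apply sum_congr rfl
  intro i _
  ring

lemma key_compare {α β : Type*} (s : Finset α) (t : Finset β) (e : α → ℕ) (f : β → ℕ)
    (w : α → ℝ) (v : β → ℝ) (hv : ∀ j ∈ t, 0 ≤ v j)
    (r : ℝ) (hr0 : 0 ≤ r) (hr1 : r ≤ 1) (N : ℕ)
    (he : ∀ i ∈ s, e i ≤ N) (hf : ∀ j ∈ t, f j ≤ N)
    (H : ∀ M : ℕ, ∑ i ∈ s.filter (fun i => e i ≤ M), w i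
        ≤ ∑ j ∈ t.filter (fun j => f j ≤ M), v j) :
    ∑ i ∈ s, w i * r ^ e i ≤ ∑ j ∈ t, v j * r ^ f j := by
  rw [expand_sum s e w r N he, expand_sum t f v r N hf]
  apply add_le_add
  · apply mul_le_mul_of_nonneg_right _ (pow_nonneg hr0 N)
    have hs : s.filter (fun i => e i ≤ N) = s := filter_true_of_mem he
    have ht : t.filter (fun j => f j ≤ N) = t := filter_true_of_mem hf
    have := H N
    rwa [hs, ht] at this
  · apply sum_le_sum
    intro m _
    apply mul_le_mul_of_nonneg_left (H m)
    have := pow_le_pow_of_le_one hr0 hr1 (show m ≤ m + 1 by omega)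
    linarith

lemma evA (c d w : ℕ) : ∑ i ∈ range c, w * (3 * i + d)
    = 3 * w * (∑ i ∈ range c, i) + w * d * c := by
  induction c with
  | zero => simp
  | succ c ih => rw [sum_range_succ, sum_range_succ, ih]; ring

lemma evSq (c d : ℕ) : ∑ i ∈ range c, (3 * i + d) ^ 2
    = 9 * (∑ i ∈ range c, i ^ 2) + 6 * d * (∑ i ∈ range c, i) + d ^ 2 * c := by
  induction c with
  | zero => simp
  | succ c ih => rw [sum_range_succ, sum_range_succ, sum_range_succ, ih]; ring

lemma evTS (K w : ℕ) : ∑ u ∈ range K, (∑ _j ∈ range (u + 1), w)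
    = w * (∑ u ∈ range K, u) + w * K := by
  have h : ∀ u : ℕ, ∑ _j ∈ range (u + 1), w = w * u + w := by
    intro u; rw [sum_const, card_range, smul_eq_mul]; ring
  rw [sum_congr rfl (fun u _ => h u), sum_add_distrib, ← mul_sum, sum_const, card_range,
    smul_eq_mul]
  ring

lemma evTS2 (K e : ℕ) : ∑ u ∈ range K, (∑ j ∈ range (u + 1), 3 * (3 * j + e))
    = 9 * (∑ u ∈ range K, ∑ j ∈ range (u + 1), j) + 3 * e * (∑ u ∈ range K, u) + 3 * e * K := by
  induction K with
  | zero => simp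
  | succ K ih =>
    rw [sum_range_succ, sum_range_succ (fun u => ∑ j ∈ range (u + 1), j),
      sum_range_succ (fun u => u), ih, evA (K + 1) e 3, sum_range_succ (fun j => j) K]
    ring

lemma class_sum (n M d e K : ℕ) (hM : M ≤ 3 * n) (hde : 2 ≤ d + e)
    (hK : K = (M + 3 - (d + e)) / 3) (g : ℕ → ℕ) :
    ∑ i ∈ range n, ∑ j ∈ range n, (if 3 * i + d + (3 * j + e) ≤ M then g j else 0)
      = ∑ u ∈ range K, ∑ j ∈ range (u + 1), g j := by
  have hKn : K ≤ n := by omega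
  have hin : ∀ i ∈ range n,
      ∑ j ∈ range n, (if 3 * i + d + (3 * j + e) ≤ M then g j else 0)
        = ∑ j ∈ range (K - i), g j := by
    intro i _
    exact sum_ite_range (show K - i ≤ n by omega) g _ (fun j => by omega)
  rw [sum_congr rfl hin, ← Finset.sum_subset (range_subset_range.2 hKn)
    (fun x _ hx => by rw [show K - x = 0 by simp only [mem_range] at hx; omega]; simp)]
  exact tri_s14 g K

lemma classB (n M d e K : ℕ) (hM : M ≤ 3 * n) (hde : 2 ≤ d + e)
    (hK : K = (M + 3 - (d + e)) / 3) :
    ∑ i ∈ range n, ∑ j ∈ range n, (if 3 * i + d + (3 * j + e) ≤ M then 3 else 0)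
      = 3 * (∑ u ∈ range K, u) + 3 * K := by
  have h := class_sum n M d e K hM hde hK (fun _ => 3)
  rw [h]
  exact evTS K 3

lemma classA (n M d e K : ℕ) (hM : M ≤ 3 * n) (hde : 2 ≤ d + e)
    (hK : K = (M + 3 - (d + e)) / 3) :
    ∑ i ∈ range n, ∑ j ∈ range n, (if 3 * i + d + (3 * j + e) ≤ M then 3 * (3 * j + e) else 0)
      = 9 * (∑ u ∈ range K, ∑ j ∈ range (u + 1), j) + 3 * e * (∑ u ∈ range K, u) + 3 * e * K := by
  have h := class_sum n M d e K hM hde hK (fun j => 3 * (3 * j + e))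
  rw [h, evTS2 K e]

end Helpers

section Counting

lemma HBmain (n M : ℕ) (hM : M ≤ 3 * n) :
    ∑ p ∈ ((range n ×ˢ ({1, 2} : Finset ℕ))).filter (fun p => 3 * p.1 + p.2 + 1 ≤ M),
        (2 * (3 * p.1 + p.2))
      ≤ ∑ q ∈ (((range n ×ˢ ({1, 2} : Finset ℕ))) ×ˢ ((range n ×ˢ ({1, 2} : Finset ℕ)))).filter
          (fun q => 3 * q.1.1 + q.1.2 + (3 * q.2.1 + q.2.2) ≤ M), 3 := by
  simp only [sum_filter, sum_product, Finset.sum_pair (show (1:ℕ) ≠ 2 by norm_num),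
    sum_add_distrib]
  rw [sum_ite_range (show (M + 1) / 3 ≤ n by omega) (fun i => 2 * (3 * i + 1)) _ (fun i => by omega),
    sum_ite_range (show M / 3 ≤ n by omega) (fun i => 2 * (3 * i + 2)) _ (fun i => by omega),
    classB n M 1 1 ((M + 1) / 3) hM (by norm_num) (by omega),
    classB n M 2 1 (M / 3) hM (by norm_num) (by omega),
    classB n M 1 2 (M / 3) hM (by norm_num) (by omega),
    classB n M 2 2 ((M - 1) / 3) hM (by norm_num) (by omega),
    evA ((M + 1) / 3) 1 2, evA (M / 3) 2 2]
  generalize hA : (M + 1) / 3 = A at *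
  generalize hB : M / 3 = B at *
  generalize hC : (M - 1) / 3 = C at *
  have h2 := sumT A
  have h3 := sumT B
  have h4 := sumT C
  have o1 : C ≤ B := by omega
  have o2 : B ≤ A := by omega
  have o3 : A ≤ C + 1 := by omega
  zify at h2 h3 h4 o1 o2 o3 ⊢
  nlinarith [h2, h3, h4, o1, o2, o3,
    mul_nonneg (sub_nonneg.2 o3) (by positivity : (0:ℤ) ≤ (A:ℤ)),
    mul_nonneg (sub_nonneg.2 o3) (by positivity : (0:ℤ) ≤ (C:ℤ))]

lemma HAmain (n M : ℕ) (hM : M ≤ 3 * n) :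
    ∑ p ∈ ((range n ×ˢ ({1, 2} : Finset ℕ))).filter (fun p => 3 * p.1 + p.2 + 1 ≤ M),
        ((3 * p.1 + p.2) ^ 2)
      ≤ ∑ q ∈ (((range n ×ˢ ({1, 2} : Finset ℕ))) ×ˢ ((range n ×ˢ ({1, 2} : Finset ℕ)))).filter
          (fun q => 3 * q.1.1 + q.1.2 + (3 * q.2.1 + q.2.2) ≤ M), (3 * (3 * q.2.1 + q.2.2)) := by
  simp only [sum_filter, sum_product, Finset.sum_pair (show (1:ℕ) ≠ 2 by norm_num),
    sum_add_distrib]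
  rw [sum_ite_range (show (M + 1) / 3 ≤ n by omega) (fun i => (3 * i + 1) ^ 2) _ (fun i => by omega),
    sum_ite_range (show M / 3 ≤ n by omega) (fun i => (3 * i + 2) ^ 2) _ (fun i => by omega),
    classA n M 1 1 ((M + 1) / 3) hM (by norm_num) (by omega),
    classA n M 2 1 (M / 3) hM (by norm_num) (by omega),
    classA n M 1 2 (M / 3) hM (by norm_num) (by omega),
    classA n M 2 2 ((M - 1) / 3) hM (by norm_num) (by omega),
    evSq ((M + 1) / 3) 1, evSq (M / 3) 2]
  generalize hA : (M + 1) / 3 = A at *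
  generalize hB : M / 3 = B at *
  generalize hC : (M - 1) / 3 = C at *
  have h2 := sumT A
  have h3 := sumT B
  have h4 := sumT C
  have s2 := sumS2 A
  have s3 := sumS2 B
  have v2 := sumV A
  have v3 := sumV B
  have v4 := sumV C
  have o1 : C ≤ B := by omega
  have o2 : B ≤ A := by omega
  have o3 : A ≤ C + 1 := by omega
  zify at h2 h3 h4 s2 s3 v2 v3 v4 o1 o2 o3 ⊢
  nlinarith [h2, h3, h4, s2, s3, v2, v3, v4, o1, o2, o3,
    mul_nonneg (sub_nonneg.2 o3) (by positivity : (0:ℤ) ≤ (A:ℤ) ^ 2),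
    mul_nonneg (mul_nonneg (by positivity : (0:ℤ) ≤ (C:ℤ)) (sub_nonneg.2 o3))
      (by positivity : (0:ℤ) ≤ (C:ℤ) + 1 + (A:ℤ))]

lemma HBnat (n M : ℕ) :
    ∑ p ∈ ((range n ×ˢ ({1, 2} : Finset ℕ))).filter (fun p => 3 * p.1 + p.2 + 1 ≤ M),
        (2 * (3 * p.1 + p.2))
      ≤ ∑ q ∈ (((range n ×ˢ ({1, 2} : Finset ℕ))) ×ˢ ((range n ×ˢ ({1, 2} : Finset ℕ)))).filter
          (fun q => 3 * q.1.1 + q.1.2 + (3 * q.2.1 + q.2.2) ≤ M), 3 := by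
  by_cases hM : M ≤ 3 * n
  · exact HBmain n M hM
  · have hmem : ∀ p ∈ (range n ×ˢ ({1, 2} : Finset ℕ)), 3 * p.1 + p.2 + 1 ≤ 3 * n := by
      intro p hp
      simp only [mem_product, mem_range, mem_insert, mem_singleton] at hp
      omega
    have e1 : ((range n ×ˢ ({1, 2} : Finset ℕ))).filter (fun p => 3 * p.1 + p.2 + 1 ≤ M)
        = ((range n ×ˢ ({1, 2} : Finset ℕ))).filter (fun p => 3 * p.1 + p.2 + 1 ≤ 3 * n) := by
      rw [filter_true_of_mem (fun p hp => by have := hmem p hp; omega),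
        filter_true_of_mem hmem]
    rw [e1]
    refine le_trans (HBmain n (3 * n) le_rfl) (sum_le_sum_of_subset ?_)
    exact monotone_filter_right _ (fun q hq => by omega)

lemma HAnat (n M : ℕ) :
    ∑ p ∈ ((range n ×ˢ ({1, 2} : Finset ℕ))).filter (fun p => 3 * p.1 + p.2 + 1 ≤ M),
        ((3 * p.1 + p.2) ^ 2)
      ≤ ∑ q ∈ (((range n ×ˢ ({1, 2} : Finset ℕ))) ×ˢ ((range n ×ˢ ({1, 2} : Finset ℕ)))).filter
          (fun q => 3 * q.1.1 + q.1.2 + (3 * q.2.1 + q.2.2) ≤ M), (3 * (3 * q.2.1 + q.2.2)) := by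
  by_cases hM : M ≤ 3 * n
  · exact HAmain n M hM
  · have hmem : ∀ p ∈ (range n ×ˢ ({1, 2} : Finset ℕ)), 3 * p.1 + p.2 + 1 ≤ 3 * n := by
      intro p hp
      simp only [mem_product, mem_range, mem_insert, mem_singleton] at hp
      omega
    have e1 : ((range n ×ˢ ({1, 2} : Finset ℕ))).filter (fun p => 3 * p.1 + p.2 + 1 ≤ M)
        = ((range n ×ˢ ({1, 2} : Finset ℕ))).filter (fun p => 3 * p.1 + p.2 + 1 ≤ 3 * n) := by
      rw [filter_true_of_mem (fun p hp => by have := hmem p hp; omega),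
        filter_true_of_mem hmem]
    rw [e1]
    refine le_trans (HAmain n (3 * n) le_rfl) (sum_le_sum_of_subset ?_)
    exact monotone_filter_right _ (fun q hq => by omega)

end Counting

lemma Xsum_eq (j n : ℕ) (r : ℝ) :
    Xsum j n r = ∑ i ∈ range n,
      (((3 * i + 1 : ℕ) : ℝ) ^ j * r ^ (3 * i + 1)
        + ((3 * i + 2 : ℕ) : ℝ) ^ j * r ^ (3 * i + 2)) := by
  induction n with
  | zero => simp [Xsum]
  | succ n ih =>
    have hset : Finset.Icc 1 (3 * (n + 1)) =
        insert (3 * n + 1) (insert (3 * n + 2) (insert (3 * n + 3) (Finset.Icc 1 (3 * n)))) := by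
      ext x
      simp only [Finset.mem_Icc, Finset.mem_insert]
      omega
    have h1 : ¬ (3 ∣ 3 * n + 1) := by omega
    have h2 : ¬ (3 ∣ 3 * n + 2) := by omega
    have h3 : (3 ∣ 3 * n + 3) := ⟨n + 1, by ring⟩
    have hm1 : (3 * n + 1) ∉ insert (3 * n + 2)
        ((Finset.Icc 1 (3 * n)).filter (fun k => ¬ (3 ∣ k))) := by
      simp only [Finset.mem_insert, Finset.mem_filter, Finset.mem_Icc]
      omega
    have hm2 : (3 * n + 2) ∉ (Finset.Icc 1 (3 * n)).filter (fun k => ¬ (3 ∣ k)) := by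
      simp only [Finset.mem_filter, Finset.mem_Icc]
      omega
    rw [Xsum, hset, filter_insert, filter_insert, filter_insert,
      if_pos h1, if_pos h2, if_neg (by simpa using h3), sum_insert hm1, sum_insert hm2,
      ← Xsum, ih, sum_range_succ]
    ring

lemma Xsum_prod (j n : ℕ) (r : ℝ) :
    Xsum j n r = ∑ p ∈ (range n ×ˢ ({1, 2} : Finset ℕ)),
      ((3 * p.1 + p.2 : ℕ) : ℝ) ^ j * r ^ (3 * p.1 + p.2) := by
  rw [Xsum_eq, sum_product]
  simp only [Finset.sum_pair (show (1:ℕ) ≠ 2 by norm_num)]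

lemma lemB (n : ℕ) (r : ℝ) (hr0 : 0 ≤ r) (hr1 : r ≤ 1) :
    2 * (r * Xsum 1 n r) ≤ 3 * (Xsum 0 n r) ^ 2 := by
  have hL : 2 * (r * Xsum 1 n r)
      = ∑ p ∈ (range n ×ˢ ({1, 2} : Finset ℕ)),
          ((2 * (3 * p.1 + p.2) : ℕ) : ℝ) * r ^ (3 * p.1 + p.2 + 1) := by
    rw [Xsum_prod 1 n r, mul_sum, mul_sum]
    apply sum_congr rfl
    intro p _
    push_cast
    ring
  have hR : 3 * (Xsum 0 n r) ^ 2
      = ∑ q ∈ ((range n ×ˢ ({1, 2} : Finset ℕ)) ×ˢ (range n ×ˢ ({1, 2} : Finset ℕ))),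
          ((3 : ℕ) : ℝ) * r ^ (3 * q.1.1 + q.1.2 + (3 * q.2.1 + q.2.2)) := by
    rw [sum_product, Xsum_prod 0 n r, sq, sum_mul_sum, mul_sum]
    apply sum_congr rfl
    intro p _
    rw [mul_sum]
    apply sum_congr rfl
    intro q _
    dsimp only
    push_cast
    rw [pow_add]
    ring
  rw [hL, hR]
  refine key_compare (range n ×ˢ ({1, 2} : Finset ℕ))
    ((range n ×ˢ ({1, 2} : Finset ℕ)) ×ˢ (range n ×ˢ ({1, 2} : Finset ℕ)))
    (fun p => 3 * p.1 + p.2 + 1)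
    (fun q => 3 * q.1.1 + q.1.2 + (3 * q.2.1 + q.2.2))
    (fun p => ((2 * (3 * p.1 + p.2) : ℕ) : ℝ))
    (fun _ => ((3 : ℕ) : ℝ))
    (fun j _ => by positivity) r hr0 hr1 (6 * n + 2) ?_ ?_ ?_
  · intro p hp
    simp only [mem_product, mem_range, mem_insert, mem_singleton] at hp
    omega
  · intro q hq
    simp only [mem_product, mem_range, mem_insert, mem_singleton] at hq
    omega
  · intro M
    have h := HBnat n M
    have c1 : ∑ p ∈ ((range n ×ˢ ({1, 2} : Finset ℕ))).filter
          (fun p => 3 * p.1 + p.2 + 1 ≤ M), ((2 * (3 * p.1 + p.2) : ℕ) : ℝ)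
        = ((∑ p ∈ ((range n ×ˢ ({1, 2} : Finset ℕ))).filter
          (fun p => 3 * p.1 + p.2 + 1 ≤ M), (2 * (3 * p.1 + p.2)) : ℕ) : ℝ) := by
      rw [Nat.cast_sum]
    have c2 : ∑ q ∈ (((range n ×ˢ ({1, 2} : Finset ℕ))) ×ˢ ((range n ×ˢ ({1, 2} : Finset ℕ)))).filter
          (fun q => 3 * q.1.1 + q.1.2 + (3 * q.2.1 + q.2.2) ≤ M), ((3 : ℕ) : ℝ)
        = ((∑ q ∈ (((range n ×ˢ ({1, 2} : Finset ℕ))) ×ˢ ((range n ×ˢ ({1, 2} : Finset ℕ)))).filter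
          (fun q => 3 * q.1.1 + q.1.2 + (3 * q.2.1 + q.2.2) ≤ M), 3 : ℕ) : ℝ) := by
      rw [Nat.cast_sum]
    rw [c1, c2]
    exact_mod_cast h

lemma lemA (n : ℕ) (r : ℝ) (hr0 : 0 ≤ r) (hr1 : r ≤ 1) :
    r * Xsum 2 n r ≤ 3 * (Xsum 0 n r * Xsum 1 n r) := by
  have hL : r * Xsum 2 n r
      = ∑ p ∈ (range n ×ˢ ({1, 2} : Finset ℕ)),
          (((3 * p.1 + p.2) ^ 2 : ℕ) : ℝ) * r ^ (3 * p.1 + p.2 + 1) := by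
    rw [Xsum_prod 2 n r, mul_sum]
    apply sum_congr rfl
    intro p _
    push_cast
    ring
  have hR : 3 * (Xsum 0 n r * Xsum 1 n r)
      = ∑ q ∈ ((range n ×ˢ ({1, 2} : Finset ℕ)) ×ˢ (range n ×ˢ ({1, 2} : Finset ℕ))),
          ((3 * (3 * q.2.1 + q.2.2) : ℕ) : ℝ) * r ^ (3 * q.1.1 + q.1.2 + (3 * q.2.1 + q.2.2)) := by
    rw [sum_product, Xsum_prod 0 n r, Xsum_prod 1 n r, sum_mul_sum, mul_sum]
    apply sum_congr rfl
    intro p _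
    rw [mul_sum]
    apply sum_congr rfl
    intro q _
    dsimp only
    push_cast
    rw [pow_add]
    ring
  rw [hL, hR]
  refine key_compare (range n ×ˢ ({1, 2} : Finset ℕ))
    ((range n ×ˢ ({1, 2} : Finset ℕ)) ×ˢ (range n ×ˢ ({1, 2} : Finset ℕ)))
    (fun p => 3 * p.1 + p.2 + 1)
    (fun q => 3 * q.1.1 + q.1.2 + (3 * q.2.1 + q.2.2))
    (fun p => (((3 * p.1 + p.2) ^ 2 : ℕ) : ℝ))
    (fun q => ((3 * (3 * q.2.1 + q.2.2) : ℕ) : ℝ))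
    (fun j _ => by positivity) r hr0 hr1 (6 * n + 2) ?_ ?_ ?_
  · intro p hp
    simp only [mem_product, mem_range, mem_insert, mem_singleton] at hp
    omega
  · intro q hq
    simp only [mem_product, mem_range, mem_insert, mem_singleton] at hq
    omega
  · intro M
    have h := HAnat n M
    calc ∑ p ∈ ((range n ×ˢ ({1, 2} : Finset ℕ))).filter
          (fun p => 3 * p.1 + p.2 + 1 ≤ M), (((3 * p.1 + p.2) ^ 2 : ℕ) : ℝ)
        = ((∑ p ∈ ((range n ×ˢ ({1, 2} : Finset ℕ))).filter
          (fun p => 3 * p.1 + p.2 + 1 ≤ M), ((3 * p.1 + p.2) ^ 2) : ℕ) : ℝ) := by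
          rw [Nat.cast_sum]
      _ ≤ ((∑ q ∈ (((range n ×ˢ ({1, 2} : Finset ℕ))) ×ˢ ((range n ×ˢ ({1, 2} : Finset ℕ)))).filter
          (fun q => 3 * q.1.1 + q.1.2 + (3 * q.2.1 + q.2.2) ≤ M),
            (3 * (3 * q.2.1 + q.2.2)) : ℕ) : ℝ) := by exact_mod_cast h
      _ = ∑ q ∈ (((range n ×ˢ ({1, 2} : Finset ℕ))) ×ˢ ((range n ×ˢ ({1, 2} : Finset ℕ)))).filter
          (fun q => 3 * q.1.1 + q.1.2 + (3 * q.2.1 + q.2.2) ≤ M),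
            ((3 * (3 * q.2.1 + q.2.2) : ℕ) : ℝ) := by rw [Nat.cast_sum]

theorem X2_div_X0_cubed (n : ℕ) (hn : 1 ≤ n) (r : ℝ) (hr : r ∈ Set.Ioc (0 : ℝ) 1) :
    r ^ 2 * Xsum 2 n r / (Xsum 0 n r) ^ 3 ≤ 9 / 2 := by
  obtain ⟨hr0, hr1⟩ := hr
  have hX0 : 0 < Xsum 0 n r := by
    rw [Xsum_eq]
    apply Finset.sum_pos
    · intro i _
      positivity
    · simp only [nonempty_range_iff]
      omega
  have hX1 : 0 ≤ Xsum 1 n r := by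
    rw [Xsum_eq]
    apply Finset.sum_nonneg
    intro i _
    positivity
  have hA := lemA n r hr0.le hr1
  have hB := lemB n r hr0.le hr1
  rw [div_le_iff₀ (by positivity)]
  have h1 : r * (r * Xsum 2 n r) ≤ r * (3 * (Xsum 0 n r * Xsum 1 n r)) :=
    mul_le_mul_of_nonneg_left hA hr0.le
  have h2 : (3 / 2) * Xsum 0 n r * (2 * (r * Xsum 1 n r))
      ≤ (3 / 2) * Xsum 0 n r * (3 * (Xsum 0 n r) ^ 2) := by
    apply mul_le_mul_of_nonneg_left hB
    positivity
  nlinarith [h1, h2]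
end

section
/- Suppose 0 < r ≤ 1, θ, φ ∈ ℝ, {u_k} is a positive monotonically increasing real sequence, and a ≤ b are nonnegative integers. Then |∑_{k=a}^{b} u_k r^k cos(kθ + φ)| ≤ (1/|1 − r e^{iθ}|) · ((1−r) ∑_{k=a}^{b} u_k r^k + 2 r^{b+1} u_b). -/
lemma abel_id {R : Type*} [CommRing R] (c : ℕ → R) (z : R) (a : ℕ) :
    ∀ b, a ≤ b → (1 - z) * ∑ k ∈ Finset.Icc a b, c k * z ^ k
      = c a * z ^ a - c b * z ^ (b + 1)
        + ∑ k ∈ Finset.Icc (a + 1) b, (c k - c (k - 1)) * z ^ k := by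
  intro b hb
  induction b, hb using Nat.le_induction with
  | base => simp; ring
  | succ n hn ih =>
    rw [Finset.sum_Icc_succ_top (by omega), Finset.sum_Icc_succ_top (by omega), mul_add, ih]
    simp only [Nat.add_sub_cancel]
    ring

theorem abel_cos_sum_bound (r θ φ : ℝ) (hr0 : 0 < r) (hr1 : r ≤ 1)
    (u : ℕ → ℝ) (hu : ∀ k, 0 < u k) (humono : Monotone u)
    (a b : ℕ) (hab : a ≤ b)
    (hne : (r : ℂ) * Complex.exp (θ * Complex.I) ≠ 1) :
    |∑ k ∈ Finset.Icc a b, u k * r ^ k * Real.cos (k * θ + φ)| ≤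
      (1 / ‖1 - (r : ℂ) * Complex.exp (θ * Complex.I)‖) *
        ((1 - r) * ∑ k ∈ Finset.Icc a b, u k * r ^ k + 2 * r ^ (b + 1) * u b) := by
  set z : ℂ := (r : ℂ) * Complex.exp (θ * Complex.I) with hzdef
  have habsz : ‖z‖ = r := by
    simp [hzdef, Complex.norm_exp, abs_of_pos hr0]
  have habszk : ∀ k : ℕ, ‖z ^ k‖ = r ^ k := by
    intro k; rw [norm_pow, habsz]
  have hd : 0 < ‖1 - z‖ := by
    rw [norm_pos_iff]
    intro h
    apply hne
    have := sub_eq_zero.mp h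
    exact this.symm
  set T : ℂ := ∑ k ∈ Finset.Icc a b, (u k : ℂ) * z ^ k with hT
  -- step 1: the real sum is Re (exp(φ I) * T)
  have hterm : ∀ k : ℕ, (Complex.exp (φ * Complex.I) * ((u k : ℂ) * z ^ k)).re
      = u k * r ^ k * Real.cos (k * θ + φ) := by
    intro k
    have h1 : Complex.exp (φ * Complex.I) * ((u k : ℂ) * z ^ k)
        = ((u k * r ^ k : ℝ) : ℂ) * Complex.exp (((k * θ + φ : ℝ)) * Complex.I) := by
      rw [hzdef, mul_pow, ← Complex.exp_nat_mul]
      rw [show Complex.exp (↑φ * Complex.I) * ((u k : ℂ) * ((r : ℂ) ^ k * Complex.exp (↑k * (↑θ * Complex.I))))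
          = ((u k : ℂ) * (r : ℂ) ^ k) * (Complex.exp (↑k * (↑θ * Complex.I)) * Complex.exp (↑φ * Complex.I)) from by ring,
        ← Complex.exp_add]
      push_cast
      ring_nf
    rw [h1, Complex.re_ofReal_mul, Complex.exp_ofReal_mul_I_re]
  have hre : ∑ k ∈ Finset.Icc a b, u k * r ^ k * Real.cos (k * θ + φ)
      = (Complex.exp (φ * Complex.I) * T).re := by
    rw [hT, Finset.mul_sum, Complex.re_sum]
    exact Finset.sum_congr rfl fun k _ => (hterm k).symm
  -- step 2: |real sum| ≤ |T|
  have h2 : |∑ k ∈ Finset.Icc a b, u k * r ^ k * Real.cos (k * θ + φ)| ≤ ‖T‖ := by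
    rw [hre]
    calc |(Complex.exp (φ * Complex.I) * T).re| ≤ ‖Complex.exp (φ * Complex.I) * T‖ :=
          Complex.abs_re_le_norm _
      _ = ‖T‖ := by
          rw [norm_mul, Complex.norm_exp]
          simp
  -- step 3: Abel identity over ℂ
  have hC := abel_id (fun k => (u k : ℂ)) z a b hab
  -- step 4: Abel identity over ℝ
  have hR := abel_id u r a b hab
  -- step 5: bound |(1-z) T|
  have h5 : ‖(1 - z) * T‖ ≤
      (1 - r) * ∑ k ∈ Finset.Icc a b, u k * r ^ k + 2 * r ^ (b + 1) * u b := by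
    rw [hT, hC]
    have htri : ‖(u a : ℂ) * z ^ a - (u b : ℂ) * z ^ (b + 1)
          + ∑ k ∈ Finset.Icc (a + 1) b, ((u k : ℂ) - (u (k - 1) : ℂ)) * z ^ k‖
        ≤ u a * r ^ a + u b * r ^ (b + 1)
          + ∑ k ∈ Finset.Icc (a + 1) b, (u k - u (k - 1)) * r ^ k := by
      refine le_trans (norm_add_le _ _) (add_le_add (le_trans (norm_sub_le _ _) ?_) ?_)
      · rw [norm_mul, norm_mul, habszk, habszk, Complex.norm_real, Complex.norm_real, Real.norm_eq_abs, Real.norm_eq_abs,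
          abs_of_pos (hu a), abs_of_pos (hu b)]
      · refine le_trans (norm_sum_le _ _) (le_of_eq ?_)
        refine Finset.sum_congr rfl fun k hk => ?_
        have hk1 : k - 1 ≤ k := Nat.sub_le _ _
        rw [norm_mul, habszk, ← Complex.ofReal_sub, Complex.norm_real, Real.norm_eq_abs,
          abs_of_nonneg (sub_nonneg.mpr (humono hk1))]
    refine le_trans htri (le_of_eq ?_)
    have : ∑ k ∈ Finset.Icc (a + 1) b, (u k - u (k - 1)) * r ^ k
        = (1 - r) * ∑ k ∈ Finset.Icc a b, u k * r ^ k - u a * r ^ a + u b * r ^ (b + 1) := by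
      rw [hR]; ring
    rw [this]; ring
  -- conclude
  have hTa : ‖T‖ ≤ (1 / ‖1 - z‖) *
      ((1 - r) * ∑ k ∈ Finset.Icc a b, u k * r ^ k + 2 * r ^ (b + 1) * u b) := by
    rw [one_div, ← div_eq_inv_mul, le_div_iff₀ hd]
    calc ‖T‖ * ‖1 - z‖ = ‖(1 - z) * T‖ := by
          rw [norm_mul]; ring
      _ ≤ _ := h5
  exact le_trans h2 hTa
end

section
/- For every real n ≥ 1 and θ ∈ [−π/n, π/n], cos(nθ) − cos(nθ + θ) ≤ 6(2n+1) / (3 cot²(θ/2) + 2n² + 2n + 3). -/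
open Real

lemma sin_ge_cubic {x : ℝ} (hx : 0 ≤ x) : x - x ^ 3 / 6 ≤ Real.sin x := by
  have key : MonotoneOn (fun y : ℝ => Real.sin y - (y - y ^ 3 / 6)) (Set.Ici 0) := by
    have hd : ∀ y : ℝ, HasDerivAt (fun y : ℝ => Real.sin y - (y - y ^ 3 / 6))
        (Real.cos y - (1 - y ^ 2 / 2)) y := by
      intro y
      have h1 := (Real.hasDerivAt_sin y).sub
        ((hasDerivAt_id y).sub ((hasDerivAt_pow 3 y).div_const 6))
      refine HasDerivAt.congr_deriv h1 ?_
      simp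
      ring
    apply monotoneOn_of_deriv_nonneg (convex_Ici 0)
    · exact (Real.continuous_sin.sub (by continuity)).continuousOn
    · intro y hy
      exact (hd y).differentiableAt.differentiableWithinAt
    · intro y hy
      rw [(hd y).deriv]
      have := Real.one_sub_sq_div_two_le_cos (x := y)
      linarith
  have h0 := key (Set.self_mem_Ici) (Set.mem_Ici.2 hx) hx
  simp at h0
  linarith

lemma cos_le_quartic_aux {x : ℝ} (hx : 0 ≤ x) :
    Real.cos x ≤ 1 - x ^ 2 / 2 + x ^ 4 / 24 := by
  have key : MonotoneOn (fun y : ℝ => (1 - y ^ 2 / 2 + y ^ 4 / 24) - Real.cos y)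
        (Set.Ici 0) := by
      have hd : ∀ y : ℝ, HasDerivAt (fun y : ℝ => (1 - y ^ 2 / 2 + y ^ 4 / 24) - Real.cos y)
          (Real.sin y - (y - y ^ 3 / 6)) y := by
        intro y
        have h1 := ((((hasDerivAt_const y (1:ℝ)).sub ((hasDerivAt_pow 2 y).div_const 2)).add
          ((hasDerivAt_pow 4 y).div_const 24)).sub (Real.hasDerivAt_cos y))
        refine HasDerivAt.congr_deriv h1 ?_
        simp
        ring
      apply monotoneOn_of_deriv_nonneg (convex_Ici 0)
      · exact ((by continuity : Continuous fun y : ℝ => 1 - y ^ 2 / 2 + y ^ 4 / 24).sub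
          Real.continuous_cos).continuousOn
      · intro y hy
        exact (hd y).differentiableAt.differentiableWithinAt
      · intro y hy
        rw [(hd y).deriv]
        have := sin_ge_cubic (le_of_lt (Set.mem_Ioi.1 (interior_Ici (a := (0:ℝ)) ▸ hy)))
        linarith
  have h0 := key (Set.self_mem_Ici) (Set.mem_Ici.2 hx) hx
  simp at h0
  linarith

lemma cos_le_quartic (x : ℝ) : Real.cos x ≤ 1 - x ^ 2 / 2 + x ^ 4 / 24 := by
  rcases le_total 0 x with hx | hx
  · exact cos_le_quartic_aux hx
  · have h := cos_le_quartic_aux (neg_nonneg.2 hx)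
    rw [Real.cos_neg] at h
    calc Real.cos x ≤ 1 - (-x) ^ 2 / 2 + (-x) ^ 4 / 24 := h
      _ = 1 - x ^ 2 / 2 + x ^ 4 / 24 := by ring

lemma sin_le_quintic {x : ℝ} (hx : 0 ≤ x) :
    Real.sin x ≤ x - x ^ 3 / 6 + x ^ 5 / 120 := by
  have key : MonotoneOn (fun y : ℝ => (y - y ^ 3 / 6 + y ^ 5 / 120) - Real.sin y)
      (Set.Ici 0) := by
    have hd : ∀ y : ℝ, HasDerivAt (fun y : ℝ => (y - y ^ 3 / 6 + y ^ 5 / 120) - Real.sin y)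
        ((1 - y ^ 2 / 2 + y ^ 4 / 24) - Real.cos y) y := by
      intro y
      have h1 := (((hasDerivAt_id y).sub ((hasDerivAt_pow 3 y).div_const 6)).add
        ((hasDerivAt_pow 5 y).div_const 120)).sub (Real.hasDerivAt_sin y)
      refine HasDerivAt.congr_deriv h1 ?_
      simp
      ring
    apply monotoneOn_of_deriv_nonneg (convex_Ici 0)
    · exact ((by continuity : Continuous fun y : ℝ => y - y ^ 3 / 6 + y ^ 5 / 120).sub
        Real.continuous_sin).continuousOn
    · intro y hy
      exact (hd y).differentiableAt.differentiableWithinAt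
    · intro y hy
      rw [(hd y).deriv]
      have := cos_le_quartic y
      linarith
  have h0 := key (Set.self_mem_Ici) (Set.mem_Ici.2 hx) hx
  simp at h0
  linarith


set_option maxHeartbeats 1600000 in
lemma key_ineq_s16 {m x : ℝ} (hm : 3 ≤ m) (hx0 : 0 < x) (hx : x ≤ π / (m - 1)) :
    Real.sin (m * x) * (3 + (m ^ 2 - 1) / 2 * Real.sin x ^ 2) ≤ 3 * m * Real.sin x := by
  have hm1 : (0:ℝ) < m - 1 := by linarith
  have hpi := Real.pi_pos
  have hxpi2 : x ≤ π / 2 := by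
    refine hx.trans ?_
    apply div_le_div_of_nonneg_left hpi.le two_pos (by linarith)
  have hxpi : x < π := lt_of_le_of_lt hxpi2 (by linarith)
  have hs0 : 0 < Real.sin x := Real.sin_pos_of_pos_of_lt_pi hx0 hxpi
  have hsx : Real.sin x ≤ x := (Real.sin_lt hx0).le
  have hxs : x ≤ π / 2 * Real.sin x := by
    have h := Real.mul_le_sin hx0.le hxpi2
    rw [div_mul_eq_mul_div, div_le_iff₀ hpi] at h
    nlinarith
  have hK0 : (0:ℝ) ≤ (m ^ 2 - 1) / 2 := by nlinarith
  have hpos : (0:ℝ) < 3 + (m ^ 2 - 1) / 2 * Real.sin x ^ 2 := by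
    nlinarith [mul_nonneg hK0 (sq_nonneg (Real.sin x))]
  rcases le_or_gt (Real.sin (m * x)) 0 with hS | hS
  · nlinarith [mul_nonneg (neg_nonneg.2 hS) hpos.le, mul_pos (show (0:ℝ) < 3 * m by linarith) hs0]
  rcases le_or_gt (Real.sin x) (3 / (2 * m)) with hsm | hsm
  · -- small sin x
    have hm0 : (0:ℝ) < m := by linarith
    have hmx0 : (0:ℝ) ≤ m * x := by positivity
    have h3 : Real.sin x * (2 * m) ≤ 3 := (le_div_iff₀ (by positivity)).1 hsm
    have hxb : m * x ≤ 3 * π / 4 := by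
      nlinarith [mul_le_mul_of_nonneg_left hxs hm0.le,
        mul_nonneg hpi.le (by linarith : (0:ℝ) ≤ 3 - Real.sin x * (2 * m))]
    have hmx2 : m ^ 2 * x ^ 2 ≤ 5.56 := by
      nlinarith [mul_self_le_mul_self hmx0 hxb,
        mul_self_le_mul_self hpi.le Real.pi_lt_d6.le]
    have hcube : (m ^ 2 - 1) * (m ^ 2 * x ^ 2) ≤ 14 * m ^ 2 - 20 := by
      nlinarith [mul_le_mul_of_nonneg_left hmx2 (show (0:ℝ) ≤ m ^ 2 - 1 by nlinarith),
        sq_nonneg (m - 3)]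
    have hsl := sin_ge_cubic hx0.le
    have hSu := sin_le_quintic hmx0
    have hx20 : (0:ℝ) < 3 + (m ^ 2 - 1) / 2 * x ^ 2 := by nlinarith [sq_nonneg x]
    have c1 : Real.sin (m * x) * (3 + (m ^ 2 - 1) / 2 * Real.sin x ^ 2) ≤
        Real.sin (m * x) * (3 + (m ^ 2 - 1) / 2 * x ^ 2) := by
      apply mul_le_mul_of_nonneg_left _ hS.le
      nlinarith [mul_le_mul_of_nonneg_left (mul_self_le_mul_self hs0.le hsx) hK0]
    have c2 : Real.sin (m * x) * (3 + (m ^ 2 - 1) / 2 * x ^ 2) ≤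
        (m * x - (m * x) ^ 3 / 6 + (m * x) ^ 5 / 120) * (3 + (m ^ 2 - 1) / 2 * x ^ 2) :=
      mul_le_mul_of_nonneg_right hSu hx20.le
    have c3 : (m * x - (m * x) ^ 3 / 6 + (m * x) ^ 5 / 120) * (3 + (m ^ 2 - 1) / 2 * x ^ 2) ≤
        3 * m * (x - x ^ 3 / 6) := by
      have hint : (0:ℝ) ≤ (m ^ 3 * x ^ 5) * (14 * m ^ 2 - 20 - (m ^ 2 - 1) * (m ^ 2 * x ^ 2)) := by
        apply mul_nonneg (by positivity)
        linarith
      nlinarith [hint]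
    have c4 : 3 * m * (x - x ^ 3 / 6) ≤ 3 * m * Real.sin x :=
      mul_le_mul_of_nonneg_left hsl (by linarith)
    linarith
  · -- large sin x
    have hm0 : (0:ℝ) < m := by linarith
    have h1 : (3:ℝ) ≤ 2 * m * Real.sin x := by
      rw [div_lt_iff₀ (by positivity)] at hsm
      linarith
    have h2 : (m - 1) * Real.sin x ≤ 3.1416 := by
      have := (le_div_iff₀ hm1).1 (hsx.trans hx)
      nlinarith [Real.pi_lt_d6]
    have hp3 : (0:ℝ) ≤ (2 * m * Real.sin x - 3) * (3.1416 - (m - 1) * Real.sin x) := by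
      apply mul_nonneg <;> linarith
    have ha3 : (0:ℝ) ≤ 2 * m * Real.sin x - 3 := by linarith
    have ha1 : (0:ℝ) ≤ m * (m - 3) * (2 * m * Real.sin x - 3) :=
      mul_nonneg (mul_nonneg hm0.le (by linarith)) ha3
    have ha2 : (0:ℝ) ≤ m * (2 * m * Real.sin x - 3) := mul_nonneg hm0.le ha3
    have ha4 : (0:ℝ) ≤ m * ((2 * m * Real.sin x - 3) * (3.1416 - (m - 1) * Real.sin x)) :=
      mul_nonneg hm0.le hp3
    have ha5 : (0:ℝ) ≤ m * (m * ((2 * m * Real.sin x - 3) * (3.1416 - (m - 1) * Real.sin x))) :=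
      mul_nonneg hm0.le ha4
    have hq : 3 + (m ^ 2 - 1) / 2 * Real.sin x ^ 2 ≤ 3 * m * Real.sin x := by
      nlinarith [ha1, ha2, ha3, ha4, ha5, sq_nonneg m, hm]
    calc Real.sin (m * x) * (3 + (m ^ 2 - 1) / 2 * Real.sin x ^ 2)
        ≤ 1 * (3 + (m ^ 2 - 1) / 2 * Real.sin x ^ 2) :=
          mul_le_mul_of_nonneg_right (Real.sin_le_one _) hpos.le
      _ = 3 + (m ^ 2 - 1) / 2 * Real.sin x ^ 2 := one_mul _
      _ ≤ 3 * m * Real.sin x := hq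

set_option maxHeartbeats 800000 in
lemma helper_nonneg (n : ℝ) (hn : 1 ≤ n) (θ : ℝ) (h0 : 0 ≤ θ) (h1 : θ ≤ π / n) :
    Real.cos (n * θ) - Real.cos (n * θ + θ) ≤
      6 * (2 * n + 1) /
        (3 * (Real.cos (θ / 2) / Real.sin (θ / 2)) ^ 2 + 2 * n ^ 2 + 2 * n + 3) := by
  have hn0 : (0:ℝ) < n := by linarith
  have hpi := Real.pi_pos
  rcases eq_or_lt_of_le h0 with h | h
  · rw [← h]
    simp
    apply div_nonneg (by linarith)
    nlinarith
  · have hθπ : θ ≤ π := h1.trans (div_le_self hpi.le hn)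
    have hx0 : 0 < θ / 2 := by linarith
    have hx2 : θ / 2 ≤ π / 2 := by linarith
    have hs0 : 0 < Real.sin (θ / 2) := Real.sin_pos_of_pos_of_lt_pi hx0 (by linarith)
    have hc2 : Real.cos (θ / 2) ^ 2 = 1 - Real.sin (θ / 2) ^ 2 := Real.cos_sq' _
    have key : Real.sin ((2 * n + 1) * (θ / 2)) *
        (3 + ((2 * n + 1) ^ 2 - 1) / 2 * Real.sin (θ / 2) ^ 2) ≤
        3 * (2 * n + 1) * Real.sin (θ / 2) := by
      apply key_ineq_s16 (by linarith) hx0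
      rw [show (2 * n + 1) - 1 = 2 * n by ring]
      rw [show π / (2 * n) = (π / n) / 2 by rw [div_div]; ring_nf]
      linarith
    have hcc : Real.cos (n * θ) - Real.cos (n * θ + θ) =
        2 * Real.sin ((2 * n + 1) * (θ / 2)) * Real.sin (θ / 2) := by
      rw [Real.cos_sub_cos,
        show (n * θ + (n * θ + θ)) / 2 = (2 * n + 1) * (θ / 2) by ring,
        show (n * θ - (n * θ + θ)) / 2 = -(θ / 2) by ring, Real.sin_neg]
      ring
    have hDrw : 3 * (Real.cos (θ / 2) / Real.sin (θ / 2)) ^ 2 + 2 * n ^ 2 + 2 * n + 3 =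
        (3 + (2 * n ^ 2 + 2 * n) * Real.sin (θ / 2) ^ 2) / Real.sin (θ / 2) ^ 2 := by
      rw [div_pow]
      field_simp
      nlinarith [hc2]
    have hNpos : (0:ℝ) < 3 + (2 * n ^ 2 + 2 * n) * Real.sin (θ / 2) ^ 2 := by
      nlinarith [sq_nonneg (Real.sin (θ / 2))]
    rw [hcc, hDrw, div_div_eq_mul_div, le_div_iff₀ hNpos]
    nlinarith [mul_le_mul_of_nonneg_left key (by positivity : (0:ℝ) ≤ 2 * Real.sin (θ / 2))]

theorem cos_diff_pade_bound (n : ℝ) (hn : 1 ≤ n) (θ : ℝ)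
    (hθ : θ ∈ Set.Icc (-(Real.pi / n)) (Real.pi / n)) :
    Real.cos (n * θ) - Real.cos (n * θ + θ) ≤
      6 * (2 * n + 1) /
        (3 * (Real.cos (θ / 2) / Real.sin (θ / 2)) ^ 2 + 2 * n ^ 2 + 2 * n + 3) := by
  obtain ⟨hθ1, hθ2⟩ := hθ
  rcases le_or_gt 0 θ with h | h
  · exact helper_nonneg n hn θ h hθ2
  · have h' := helper_nonneg n hn (-θ) (by linarith) (by linarith)
    rw [show n * -θ = -(n * θ) by ring, show -(n * θ) + -θ = -(n * θ + θ) by ring,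
      show -θ / 2 = -(θ / 2) by ring, Real.cos_neg, Real.cos_neg, Real.cos_neg,
      Real.sin_neg, div_neg, neg_sq] at h'
    exact h'
end
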